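/- arXiv:2602.22058 — 5 statements merged into one kernel-verified Lean document; each statement's English description precedes it below -/
import Mathlib

section
/- Let η be a real number with 0 ≤ η ≤ min{L, (C̄−V̄)/V} and let α, β, s_max be integers such that (a) L+1 ≤ s_max ≤ min{T−2, ⌊(C̄−V̄)/V⌋}, (b) 1 ≤ α < β ≤ s_max, and (c) β = α+1 or s_max ≤ L+α. Let S = [1,α] ∪ [β, s_max] (an interval union of integers). Then for any integer t with s_max+2 ≤ t ≤ T, every (x, y) ∈ P satisfies x_t ≤ (V̄ + η·V)·y_t + (C̄ − V̄ − η·V)·y_{t−1} − Σ_{s∈S} (C̄ − V̄ − s·V)·(y_{t−s} − y_{t−s−1}). -/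
lemma icc_split (f : ℤ → ℝ) (a b c : ℤ) (h1 : a ≤ b + 1) (h2 : b ≤ c) :
    ∑ s ∈ Finset.Icc a c, f s
      = ∑ s ∈ Finset.Icc a b, f s + ∑ s ∈ Finset.Icc (b + 1) c, f s := by
  have hu : Finset.Icc a c = Finset.Icc a b ∪ Finset.Icc (b + 1) c := by
    ext u; simp only [Finset.mem_Icc, Finset.mem_union]; omega
  rw [hu, Finset.sum_union]
  rw [Finset.disjoint_left]
  intro u hu1 hu2
  simp only [Finset.mem_Icc] at hu1 hu2; omega

lemma abel_sum (y : ℤ → ℝ) (c0 V : ℝ) (t a b : ℤ) (hab : a ≤ b) :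
    ∑ s ∈ Finset.Icc a b, (c0 - (s : ℝ) * V) * (y (t - s) - y (t - s - 1))
      = (c0 - (a : ℝ) * V) * y (t - a) - (c0 - (b : ℝ) * V) * y (t - b - 1)
        - V * ∑ s ∈ Finset.Icc (a + 1) b, y (t - s) := by
  obtain ⟨n, rfl⟩ : ∃ n : ℕ, b = a + n := ⟨(b - a).toNat, by omega⟩
  clear hab
  induction n with
  | zero =>
    have h0 : Finset.Icc (a + 1) a = ∅ := Finset.Icc_eq_empty (by omega)
    simp only [Nat.cast_zero, add_zero, h0, Finset.Icc_self, Finset.sum_singleton,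
      Finset.sum_empty, mul_zero]
    ring
  | succ n ih =>
    have hb : (a + ((n : ℕ) + 1 : ℕ) : ℤ) = (a + (n : ℕ)) + 1 := by push_cast; ring
    rw [hb]
    set b := a + (n : ℕ) with hbdef
    have h1 : Finset.Icc a (b + 1) = insert (b + 1) (Finset.Icc a b) := by
      ext u; simp only [Finset.mem_Icc, Finset.mem_insert]; omega
    have h2 : Finset.Icc (a + 1) (b + 1) = insert (b + 1) (Finset.Icc (a + 1) b) := by
      ext u; simp only [Finset.mem_Icc, Finset.mem_insert]; omega
    have h3 : (b + 1 : ℤ) ∉ Finset.Icc a b := by simp [Finset.mem_Icc]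
    have h4 : (b + 1 : ℤ) ∉ Finset.Icc (a + 1) b := by simp [Finset.mem_Icc]
    rw [h1, Finset.sum_insert h3, h2, Finset.sum_insert h4, ih]
    have e1 : t - (b + 1) = t - b - 1 := by ring
    rw [e1]
    push_cast
    ring

lemma run_end (z : ℤ → ℝ) (i M : ℤ) (hiM : i ≤ M)
    (hbin : ∀ j, i ≤ j → j ≤ M → z j = 0 ∨ z j = 1) (hzi : z i = 1) :
    ∃ e, i ≤ e ∧ e ≤ M ∧ (∀ j, i ≤ j → j ≤ e → z j = 1) ∧ (e = M ∨ z (e + 1) = 0) := by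
  obtain ⟨n, rfl⟩ : ∃ n : ℕ, M = i + n := ⟨(M - i).toNat, by omega⟩
  clear hiM
  induction n with
  | zero =>
    exact ⟨i, le_refl _, by omega,
      fun j h1 h2 => by have : j = i := le_antisymm h2 h1; rw [this]; exact hzi,
      Or.inl (by omega)⟩
  | succ n ih =>
    obtain ⟨e, he1, he2, he3, he4⟩ := ih (fun j h1 h2 => hbin j h1 (by push_cast at h2 ⊢; omega))
    rcases he4 with heM | h0
    · rcases hbin (e + 1) (by omega) (by push_cast; omega) with h | h
      · exact ⟨e, by omega, by push_cast; omega, he3, Or.inr h⟩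
      · refine ⟨e + 1, by omega, by push_cast; omega, fun j h1 h2 => ?_, ?_⟩
        · rcases lt_or_eq_of_le h2 with h2' | h2'
          · exact he3 j h1 (by omega)
          · rw [h2']; exact h
        · left; push_cast; omega
    · exact ⟨e, he1, by push_cast; omega, he3, Or.inr h0⟩

lemma sum_ge (z : ℤ → ℝ) (a b a' b' : ℤ) (ha : a ≤ a') (hb : b' ≤ b)
    (hnn : ∀ j, a ≤ j → j ≤ b → 0 ≤ z j)
    (hone : ∀ j, a' ≤ j → j ≤ b' → z j = 1) :
    ((b' + 1 - a' : ℤ) : ℝ) ≤ ∑ s ∈ Finset.Icc a b, z s := by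
  rcases le_or_gt a' b' with h | h
  · have hsub : Finset.Icc a' b' ⊆ Finset.Icc a b := by
      intro u hu; simp only [Finset.mem_Icc] at *; omega
    have h1 : ∑ s ∈ Finset.Icc a' b', z s = ((b' + 1 - a' : ℤ) : ℝ) := by
      rw [Finset.sum_congr rfl (fun j hj => by
        simp only [Finset.mem_Icc] at hj; exact hone j hj.1 hj.2)]
      rw [Finset.sum_const, nsmul_eq_mul, mul_one, Int.card_Icc]
      have h2 : ((b' + 1 - a').toNat : ℤ) = b' + 1 - a' := Int.toNat_of_nonneg (by omega)
      exact_mod_cast congrArg (Int.cast : ℤ → ℝ) h2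
    calc ((b' + 1 - a' : ℤ) : ℝ) = ∑ s ∈ Finset.Icc a' b', z s := h1.symm
      _ ≤ ∑ s ∈ Finset.Icc a b, z s := by
          apply Finset.sum_le_sum_of_subset_of_nonneg hsub
          intro j hj _; simp only [Finset.mem_Icc] at hj; exact hnn j hj.1 hj.2
  · calc ((b' + 1 - a' : ℤ) : ℝ) ≤ 0 := by exact_mod_cast (by omega : b' + 1 - a' ≤ 0)
      _ ≤ ∑ s ∈ Finset.Icc a b, z s :=
          Finset.sum_nonneg (fun j hj => by
            simp only [Finset.mem_Icc] at hj; exact hnn j hj.1 hj.2)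

/-- Membership in the single-generator unit-commitment set `P`:
`x` is the generation vector, `y` the binary on/off vector, over periods `1,…,T`. -/
def inP (T L Ldn : ℤ) (Cl Cu V Vb : ℝ) (x y : ℤ → ℝ) : Prop :=
  (∀ t : ℤ, 1 ≤ t → t ≤ T → 0 ≤ x t) ∧
  (∀ t : ℤ, 1 ≤ t → t ≤ T → y t = 0 ∨ y t = 1) ∧
  (∀ t k : ℤ, 2 ≤ t → t ≤ T → t ≤ k → k ≤ min T (t + L - 1) →
    -y (t - 1) + y t - y k ≤ 0) ∧
  (∀ t k : ℤ, 2 ≤ t → t ≤ T → t ≤ k → k ≤ min T (t + Ldn - 1) →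
    y (t - 1) - y t + y k ≤ 1) ∧
  (∀ t : ℤ, 1 ≤ t → t ≤ T → Cl * y t ≤ x t) ∧
  (∀ t : ℤ, 1 ≤ t → t ≤ T → x t ≤ Cu * y t) ∧
  (∀ t : ℤ, 2 ≤ t → t ≤ T → x t - x (t - 1) ≤ V * y (t - 1) + Vb * (1 - y (t - 1))) ∧
  (∀ t : ℤ, 2 ≤ t → t ≤ T → x (t - 1) - x t ≤ V * y t + Vb * (1 - y t))

theorem stmt_15 (T L Ldn : ℤ) (Cl Cu V Vb : ℝ)
    (hT : 1 ≤ T) (hL : 1 ≤ L) (hLdn : 1 ≤ Ldn)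
    (hCl : 0 < Cl) (hCu : Cl < Cu) (hV : 0 < V)
    (hVVb : Vb + V ≤ Cu) (hVb1 : Cl < Vb) (hVb2 : Vb < Cl + V)
    (η : ℝ) (hη0 : 0 ≤ η) (hη1 : η ≤ min (L : ℝ) ((Cu - Vb) / V))
    (α β smax : ℤ) (hs1 : L + 1 ≤ smax) (hs2 : smax ≤ min (T - 2) ⌊(Cu - Vb) / V⌋)
    (hα : 1 ≤ α) (hαβ : α < β) (hβ : β ≤ smax)
    (hc : β = α + 1 ∨ smax ≤ L + α)
    (t : ℤ) (ht1 : smax + 2 ≤ t) (ht2 : t ≤ T)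
    (x y : ℤ → ℝ) (hxy : inP T L Ldn Cl Cu V Vb x y) :
    x t ≤ (Vb + η * V) * y t + (Cu - Vb - η * V) * y (t - 1) -
      ∑ s ∈ Finset.Icc 1 α ∪ Finset.Icc β smax,
        (Cu - Vb - (s : ℝ) * V) * (y (t - s) - y (t - s - 1)) := by
  obtain ⟨hx0, hbin, hMU, _hMD, _hlb, hub, hru, _hrd⟩ := hxy
  -- basic numeric facts
  have hsT : smax ≤ T - 2 := le_trans hs2 (min_le_left _ _)
  have hsmaxV : (smax : ℝ) * V ≤ Cu - Vb := by
    have h1 : (smax : ℝ) ≤ (Cu - Vb) / V := Int.le_floor.mp (le_trans hs2 (min_le_right _ _))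
    have h2 := mul_le_mul_of_nonneg_right h1 hV.le
    rwa [div_mul_cancel₀ _ (ne_of_gt hV)] at h2
  have hηL : η ≤ (L : ℝ) := le_trans hη1 (min_le_left _ _)
  have hηV : η * V ≤ Cu - Vb := by
    have h1 := le_trans hη1 (min_le_right _ _)
    rwa [le_div_iff₀ hV] at h1
  have hcoef : ∀ s : ℤ, s ≤ smax → (s : ℝ) * V ≤ Cu - Vb := fun s hs =>
    le_trans (mul_le_mul_of_nonneg_right (by exact_mod_cast hs) hV.le) hsmaxV
  have hB : ∀ s : ℤ, 0 ≤ s → s ≤ smax + 1 → y (t - s) = 0 ∨ y (t - s) = 1 :=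
    fun s h1 h2 => hbin _ (by omega) (by omega)
  have hP : ∀ s : ℤ, 0 ≤ s → s ≤ smax + 1 → 0 ≤ y (t - s) := by
    intro s h1 h2; rcases hB s h1 h2 with h | h <;> rw [h] <;> norm_num
  -- min-up consequence
  have hMU' : ∀ e j : ℤ, 1 ≤ e → e ≤ smax → y (t - e) = 1 → y (t - e - 1) = 0 →
      0 ≤ j → j ≤ e → e - L + 1 ≤ j → y (t - j) = 1 := by
    intro e j he1 he2 hye hye' hj0 hje hjL
    have hcon := hMU (t - e) (t - j) (by omega) (by omega) (by omega)
      (by simp only [le_min_iff]; omega)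
    rw [hye', hye] at hcon
    rcases hB j hj0 (by omega) with h | h
    · rw [h] at hcon; norm_num at hcon
    · exact h
  -- ramp chain
  have hchain : ∀ e0 : ℤ, 0 ≤ e0 → e0 ≤ smax → (∀ j, 0 ≤ j → j ≤ e0 → y (t - j) = 1) →
      y (t - e0 - 1) = 0 → x t ≤ Vb + (e0 : ℝ) * V := by
    intro e0 he00 he0s hones hoff
    obtain ⟨n, rfl⟩ : ∃ n : ℕ, e0 = (n : ℤ) := ⟨e0.toNat, (Int.toNat_of_nonneg he00).symm⟩
    have hbase : x (t - (n : ℤ)) ≤ Vb := by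
      have h1 := hru (t - (n : ℤ)) (by omega) (by omega)
      have h2 : x (t - (n : ℤ) - 1) ≤ Cu * y (t - (n : ℤ) - 1) := hub _ (by omega) (by omega)
      have h3 : 0 ≤ x (t - (n : ℤ) - 1) := hx0 _ (by omega) (by omega)
      rw [hoff] at h1 h2
      linarith
    have claim : ∀ k : ℕ, (k : ℤ) ≤ (n : ℤ) → x (t - ((n : ℤ) - (k : ℤ))) ≤ Vb + (k : ℝ) * V := by
      intro k
      induction k with
      | zero =>
        intro _
        simp only [Nat.cast_zero, sub_zero, zero_mul, add_zero]
        exact hbase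
      | succ k ih =>
        intro hk
        have hk' : (k : ℤ) ≤ (n : ℤ) := by push_cast at hk ⊢; omega
        have ihh := ih hk'
        have hkn : ((k : ℕ) + 1 : ℕ) = (k + 1 : ℕ) := rfl
        have hcast : (((k + 1 : ℕ)) : ℤ) = (k : ℤ) + 1 := by push_cast; ring
        have hstep := hru (t - ((n : ℤ) - ((k : ℤ) + 1))) (by push_cast at hk; omega) (by push_cast at hk; omega)
        have hu1 : t - ((n : ℤ) - ((k : ℤ) + 1)) - 1 = t - ((n : ℤ) - (k : ℤ)) := by ring
        rw [hu1] at hstep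
        have hy1 : y (t - ((n : ℤ) - (k : ℤ))) = 1 := by
          have := hones ((n : ℤ) - (k : ℤ)) (by omega) (by omega)
          exact this
        rw [hy1] at hstep
        rw [hcast]
        push_cast
        push_cast at ihh
        linarith
    have hfin := claim n le_rfl
    rw [show t - ((n : ℤ) - (n : ℤ)) = t by ring] at hfin
    exact hfin
  -- rewrite the sum
  have hdisj : Disjoint (Finset.Icc (1:ℤ) α) (Finset.Icc β smax) := by
    rw [Finset.disjoint_left]
    intro u h1 h2
    simp only [Finset.mem_Icc] at h1 h2
    omega
  rw [Finset.sum_union hdisj, abel_sum y (Cu - Vb) V t 1 α hα, abel_sum y (Cu - Vb) V t β smax hβ]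
  set W1 := ∑ s ∈ Finset.Icc (1 + 1 : ℤ) α, y (t - s) with hW1def
  set W2 := ∑ s ∈ Finset.Icc (β + 1) smax, y (t - s) with hW2def
  -- W facts
  have hW1nn : 0 ≤ W1 := by
    rw [hW1def]
    exact Finset.sum_nonneg (fun s hs => by
      simp only [Finset.mem_Icc] at hs; exact hP s (by omega) (by omega))
  have hW2nn : 0 ≤ W2 := by
    rw [hW2def]
    exact Finset.sum_nonneg (fun s hs => by
      simp only [Finset.mem_Icc] at hs; exact hP s (by omega) (by omega))
  have hw1ge : ∀ a' b' : ℤ, 2 ≤ a' → b' ≤ α → (∀ j, a' ≤ j → j ≤ b' → y (t - j) = 1) →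
      ((b' + 1 - a' : ℤ) : ℝ) ≤ W1 := by
    intro a' b' h1 h2 hone
    rw [hW1def]
    exact sum_ge (fun s => y (t - s)) (1 + 1) α a' b' (by omega) h2
      (fun j hj1 hj2 => hP j (by omega) (by omega)) hone
  have hw2ge : ∀ a' b' : ℤ, β + 1 ≤ a' → b' ≤ smax → (∀ j, a' ≤ j → j ≤ b' → y (t - j) = 1) →
      ((b' + 1 - a' : ℤ) : ℝ) ≤ W2 := by
    intro a' b' h1 h2 hone
    rw [hW2def]
    exact sum_ge (fun s => y (t - s)) (β + 1) smax a' b' h1 h2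
      (fun j hj1 hj2 => hP j (by omega) (by omega)) hone
  have hw1ge2 : ∀ p m : ℤ, 1 ≤ p → p + 2 ≤ m → m ≤ α + 1 →
      (∀ j, 1 ≤ j → j ≤ p → y (t - j) = 1) → (∀ j, m ≤ j → j ≤ α → y (t - j) = 1) →
      ((p + 1 - 2 : ℤ) : ℝ) + ((α + 1 - m : ℤ) : ℝ) ≤ W1 := by
    intro p m h1 h2 h3 hop hom
    have hsp := icc_split (fun s => y (t - s)) (1 + 1) p α (by omega) (by omega)
    have ha := sum_ge (fun s => y (t - s)) (1 + 1) p 2 p (by omega) le_rfl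
      (fun j hj1 hj2 => hP j (by omega) (by omega)) (fun j hj1 hj2 => hop j (by omega) hj2)
    have hb := sum_ge (fun s => y (t - s)) (p + 1) α m α (by omega) le_rfl
      (fun j hj1 hj2 => hP j (by omega) (by omega)) hom
    rw [hW1def]
    exact le_trans (add_le_add ha hb) (le_of_eq hsp.symm)
  -- handy positivity facts
  have eA : t - (α + 1) = t - α - 1 := by ring
  have eS : t - (smax + 1) = t - smax - 1 := by ring
  have hPA : 0 ≤ y (t - α - 1) := by rw [← eA]; exact hP (α + 1) (by omega) (by omega)
  have hPS : 0 ≤ y (t - smax - 1) := by rw [← eS]; exact hP (smax + 1) (by omega) (by omega)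
  have hP1 : 0 ≤ y (t - 1) := hP 1 (by omega) (by omega)
  have hPβ : 0 ≤ y (t - β) := hP β (by omega) (by omega)
  have hprodA : 0 ≤ (Cu - Vb - (α : ℝ) * V) * y (t - α - 1) :=
    mul_nonneg (by linarith [hcoef α (by omega)]) hPA
  have hprodS : 0 ≤ (Cu - Vb - (smax : ℝ) * V) * y (t - smax - 1) :=
    mul_nonneg (by linarith [hcoef smax le_rfl]) hPS
  have hVW1 : 0 ≤ V * W1 := mul_nonneg hV.le hW1nn
  have hVW2 : 0 ≤ V * W2 := mul_nonneg hV.le hW2nn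
  have hxCu : x t ≤ Cu * y t := hub t (by omega) ht2
  have hxnn : 0 ≤ x t := hx0 t (by omega) ht2
  -- keyA : bound on the first interval part
  have keyA : ∀ p : ℤ, 1 ≤ p → p ≤ smax → (∀ j, 1 ≤ j → j ≤ p → y (t - j) = 1) →
      (Cu - Vb - (1 : ℝ) * V) * y (t - 1) - (Cu - Vb - (α : ℝ) * V) * y (t - α - 1) - V * W1
        ≤ Cu - Vb - (p : ℝ) * V := by
    intro p hp1 hps hones
    have hz1 : y (t - 1) = 1 := hones 1 le_rfl hp1
    rcases le_or_gt p α with hpα | hpα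
    · -- W1 ≥ p - 1
      have hw1 := hw1ge 2 p le_rfl (by omega) (fun j h1 h2 => hones j (by omega) h2)
      have hm := mul_le_mul_of_nonneg_left hw1 hV.le
      push_cast at hm
      rw [hz1]
      linarith
    · -- p ≥ α + 1 : zA = 1, W1 ≥ α - 1
      have hzA : y (t - α - 1) = 1 := by
        have := hones (α + 1) (by omega) (by omega)
        rwa [eA] at this
      have hw1 := hw1ge 2 α le_rfl le_rfl (fun j h1 h2 => hones j (by omega) (by omega))
      have hm := mul_le_mul_of_nonneg_left hw1 hV.le
      push_cast at hm
      rw [hz1, hzA]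
      have := hcoef p hps
      linarith
  -- keyB : bound on the second interval part
  have keyB : ∀ p : ℤ, 0 ≤ p → p + 2 ≤ β → y (t - (p + 1)) = 0 → y (t - β) = 1 →
      ((Cu - Vb - (β : ℝ) * V) * y (t - β) - (Cu - Vb - (smax : ℝ) * V) * y (t - smax - 1)
          - V * W2 ≤ 0)
      ∨ ∃ e m : ℤ, β ≤ e ∧ e ≤ smax ∧ p + 2 ≤ m ∧ m ≤ α + 1 ∧ m + L - 1 ≤ e ∧
          y (t - α - 1) = 1 ∧ (∀ j, m ≤ j → j ≤ α → y (t - j) = 1) ∧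
          ((Cu - Vb - (β : ℝ) * V) * y (t - β) - (Cu - Vb - (smax : ℝ) * V) * y (t - smax - 1)
            - V * W2 ≤ Cu - Vb - (e : ℝ) * V) := by
    intro p hp0 hpβ hoffp hzB
    obtain ⟨e, he1, he2, he3, he4⟩ := run_end (fun s => y (t - s)) β (smax + 1) (by omega)
      (fun j h1 h2 => hB j (by omega) h2) hzB
    have honesy : ∀ j, β ≤ j → j ≤ e → y (t - j) = 1 := he3
    rcases eq_or_lt_of_le he2 with heq | hlt
    · -- run reaches the window edge
      left
      have hzS : y (t - smax - 1) = 1 := by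
        have := honesy (smax + 1) (by omega) (by omega)
        rwa [eS] at this
      have hw2 := hw2ge (β + 1) smax le_rfl le_rfl (fun j h1 h2 => honesy j (by omega) (by omega))
      have hm := mul_le_mul_of_nonneg_left hw2 hV.le
      push_cast at hm
      rw [hzB, hzS]
      linarith
    · have hesmax : e ≤ smax := by omega
      rcases he4 with heq' | hoffE
      · omega
      · have hoff' : y (t - e - 1) = 0 := by
          have h0 : y (t - (e + 1)) = 0 := hoffE
          rwa [show t - (e + 1) = t - e - 1 by ring] at h0
        have hye : y (t - e) = 1 := honesy e (by omega) le_rfl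
        have hemL : p + 2 ≤ e - L + 1 := by
          by_contra hcon
          push_neg at hcon
          have h1 : y (t - (p + 1)) = 1 :=
            hMU' e (p + 1) (by omega) hesmax hye hoff' (by omega) (by omega) (by omega)
          rw [hoffp] at h1; norm_num at h1
        have hm1 : min (e - L + 1) β ≤ e - L + 1 := min_le_left _ _
        have hm2 : min (e - L + 1) β ≤ β := min_le_right _ _
        have hm3 : p + 2 ≤ min (e - L + 1) β := le_min hemL (by omega)
        have honesm : ∀ j, min (e - L + 1) β ≤ j → j ≤ e → y (t - j) = 1 := by
          intro j h1 h2
          rcases le_or_gt β j with h | h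
          · exact honesy j h h2
          · exact hMU' e j (by omega) hesmax hye hoff' (by omega) (by omega) (by omega)
        rcases le_or_gt (min (e - L + 1) β) (α + 1) with hmα | hmα
        · right
          have hzA : y (t - α - 1) = 1 := by
            have := honesm (α + 1) (by omega) (by omega)
            rwa [eA] at this
          have hw2 := hw2ge (β + 1) e le_rfl hesmax (fun j h1 h2 => honesm j (by omega) h2)
          refine ⟨e, min (e - L + 1) β, by omega, hesmax, hm3, hmα, by omega, hzA,
            (fun j h1 h2 => honesm j h1 (by omega)), ?_⟩
          rw [hzB]
          have hmul := mul_le_mul_of_nonneg_left hw2 hV.le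
          push_cast at hmul
          linarith [hprodS]
        · exfalso
          rcases hc with hcA | hcL
          · omega
          · omega
  -- main case analysis
  rcases hbin t (by omega) ht2 with hz0 | hz0
  · -- y t = 0, hence x t = 0
    have hxt0 : x t ≤ 0 := by rw [hz0, mul_zero] at hxCu; exact hxCu
    rcases hB 1 (by omega) (by omega) with hz1 | hz1
    · -- y (t-1) = 0
      rcases hB β (by omega) (by omega) with hzB | hzB
      · rw [hz0, hz1, hzB]
        push_cast
        linarith
      · rcases keyB 0 le_rfl (by omega) (by rwa [show t - (0 + 1 : ℤ) = t - 1 by ring]) hzB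
          with hkey | ⟨e, m, he1, he2, hm1, hm2, hm3, hzA, honesm, hkey⟩
        · rw [hz0, hz1]
          push_cast
          linarith
        · rw [hz0, hz1, hzA]
          have hce : (α : ℝ) * V ≤ (e : ℝ) * V :=
            mul_le_mul_of_nonneg_right (by exact_mod_cast (by omega : α ≤ e)) hV.le
          linarith
    · -- y (t-1) = 1 : run from index 1
      obtain ⟨e1, hf1, hf2, hf3, hf4⟩ := run_end (fun s => y (t - s)) 1 (smax + 1) (by omega)
        (fun j h1 h2 => hB j (by omega) h2) hz1
      have hones1 : ∀ j, 1 ≤ j → j ≤ e1 → y (t - j) = 1 := hf3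
      rcases eq_or_lt_of_le hf2 with heq | hlt
      · -- run reaches the edge: everything is 1
        have hzA : y (t - α - 1) = 1 := by
          have := hones1 (α + 1) (by omega) (by omega); rwa [eA] at this
        have hzB : y (t - β) = 1 := hones1 β (by omega) (by omega)
        have hzS : y (t - smax - 1) = 1 := by
          have := hones1 (smax + 1) (by omega) (by omega); rwa [eS] at this
        have hw1 := hw1ge 2 α le_rfl le_rfl (fun j h1 h2 => hones1 j (by omega) (by omega))
        have hw2 := hw2ge (β + 1) smax le_rfl le_rfl (fun j h1 h2 => hones1 j (by omega) (by omega))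
        have hm1 := mul_le_mul_of_nonneg_left hw1 hV.le
        have hm2 := mul_le_mul_of_nonneg_left hw2 hV.le
        push_cast at hm1 hm2
        rw [hz0, hz1, hzA, hzB, hzS]
        push_cast
        linarith
      · have he1smax : e1 ≤ smax := by omega
        rcases hf4 with heq' | hoffE
        · omega
        · have hoff1 : y (t - e1 - 1) = 0 := by
            have h0 : y (t - (e1 + 1)) = 0 := hoffE
            rwa [show t - (e1 + 1) = t - e1 - 1 by ring] at h0
          have hye1 : y (t - e1) = 1 := hones1 e1 (by omega) le_rfl
          have hLe1 : L ≤ e1 := by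
            by_contra hcon
            push_neg at hcon
            have h1 : y (t - 0) = 1 :=
              hMU' e1 0 (by omega) he1smax hye1 hoff1 le_rfl (by omega) (by omega)
            rw [show t - (0:ℤ) = t by ring, hz0] at h1; norm_num at h1
          have hLe1R : (L : ℝ) ≤ (e1 : ℝ) := by exact_mod_cast hLe1
          have hηe1 : η * V ≤ (e1 : ℝ) * V :=
            mul_le_mul_of_nonneg_right (le_trans hηL hLe1R) hV.le
          rcases le_or_gt β e1 with hβe1 | hβe1
          · -- β ≤ e1 : on through β
            have hzA : y (t - α - 1) = 1 := by
              have := hones1 (α + 1) (by omega) (by omega); rwa [eA] at this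
            have hzB : y (t - β) = 1 := hones1 β (by omega) hβe1
            have hw1 := hw1ge 2 α le_rfl le_rfl (fun j h1 h2 => hones1 j (by omega) (by omega))
            have hw2 := hw2ge (β + 1) e1 le_rfl he1smax (fun j h1 h2 => hones1 j (by omega) h2)
            have hm1 := mul_le_mul_of_nonneg_left hw1 hV.le
            have hm2 := mul_le_mul_of_nonneg_left hw2 hV.le
            push_cast at hm1 hm2
            rw [hz0, hz1, hzA, hzB]
            push_cast
            linarith [hprodS]
          · rcases hB β (by omega) (by omega) with hzB | hzB
            · -- y (t-β) = 0
              have hA := keyA e1 (by omega) he1smax hones1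
              rw [hz1] at hA
              rw [hz0, hz1, hzB]
              push_cast
              linarith only [hxt0, hA, hprodS, hVW2, hηe1]
            · have hβe1' : e1 + 2 ≤ β := by
                rcases eq_or_lt_of_le (by omega : e1 + 1 ≤ β) with h | h
                · exfalso
                  rw [← h] at hzB
                  rw [hoffE] at hzB; norm_num at hzB
                · omega
              rcases keyB e1 (by omega) hβe1'
                  (by rwa [show t - (e1 + 1) = t - e1 - 1 by ring]) hzB
                with hkey | ⟨e, m, hke1, hke2, hkm1, hkm2, hkm3, hzA, honesm, hkey⟩
              · have hA := keyA e1 (by omega) he1smax hones1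
                rw [hz1] at hA
                rw [hz0, hz1]
                push_cast
                linarith only [hxt0, hA, hkey, hηe1]
              · -- combined bound
                have hw1 := hw1ge2 e1 m (by omega) hkm1 hkm2
                  (fun j h1 h2 => hones1 j h1 h2) honesm
                have hm1 := mul_le_mul_of_nonneg_left hw1 hV.le
                push_cast at hm1
                have hfac : (0:ℝ) ≤ V * (1 - η + (e:ℝ) + (e1:ℝ) - (m:ℝ)) := by
                  apply mul_nonneg hV.le
                  have h1 : (m : ℝ) + (L:ℝ) - 1 ≤ (e:ℝ) := by exact_mod_cast hkm3
                  have h2 : (1:ℝ) ≤ (e1:ℝ) := by exact_mod_cast (by omega : (1:ℤ) ≤ e1)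
                  linarith
                rw [hz0, hz1, hzA]
                push_cast
                linarith
  · -- y t = 1 : run from index 0
    have hz0' : y (t - 0) = 1 := by rwa [show t - (0:ℤ) = t by ring]
    obtain ⟨e0, hg1, hg2, hg3, hg4⟩ := run_end (fun s => y (t - s)) 0 (smax + 1) (by omega)
      (fun j h1 h2 => hB j h1 h2) hz0'
    have hones0 : ∀ j, 0 ≤ j → j ≤ e0 → y (t - j) = 1 := hg3
    rcases eq_or_lt_of_le hg2 with heq | hlt
    · -- on through the whole window
      have hz1 : y (t - 1) = 1 := hones0 1 (by omega) (by omega)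
      have hzA : y (t - α - 1) = 1 := by
        have := hones0 (α + 1) (by omega) (by omega); rwa [eA] at this
      have hzB : y (t - β) = 1 := hones0 β (by omega) (by omega)
      have hzS : y (t - smax - 1) = 1 := by
        have := hones0 (smax + 1) (by omega) (by omega); rwa [eS] at this
      have hw1 := hw1ge 2 α le_rfl le_rfl (fun j h1 h2 => hones0 j (by omega) (by omega))
      have hw2 := hw2ge (β + 1) smax le_rfl le_rfl (fun j h1 h2 => hones0 j (by omega) (by omega))
      have hm1 := mul_le_mul_of_nonneg_left hw1 hV.le
      have hm2 := mul_le_mul_of_nonneg_left hw2 hV.le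
      push_cast at hm1 hm2
      rw [hz0] at hxCu
      rw [hz0, hz1, hzA, hzB, hzS]
      push_cast
      linarith
    · have he0smax : e0 ≤ smax := by omega
      rcases hg4 with heq' | hoffE
      · omega
      · have hoff0 : y (t - e0 - 1) = 0 := by
          have h0 : y (t - (e0 + 1)) = 0 := hoffE
          rwa [show t - (e0 + 1) = t - e0 - 1 by ring] at h0
        have hxramp : x t ≤ Vb + (e0 : ℝ) * V := hchain e0 hg1 he0smax hones0 hoff0
        rcases eq_or_lt_of_le hg1 with he00 | he01
        · -- e0 = 0
          have hz1 : y (t - 1) = 0 := by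
            rw [← he00] at hoff0
            rwa [show t - (0:ℤ) - 1 = t - 1 by ring] at hoff0
          have hxVb : x t ≤ Vb := by
            rw [← he00] at hxramp; push_cast at hxramp; linarith
          have hηVnn : 0 ≤ η * V := mul_nonneg hη0 hV.le
          rcases hB β (by omega) (by omega) with hzB | hzB
          · rw [hz0, hz1, hzB]
            push_cast
            linarith
          · rcases keyB 0 le_rfl (by omega) (by rwa [show t - (0 + 1 : ℤ) = t - 1 by ring]) hzB
              with hkey | ⟨e, m, he1, he2, hm1, hm2, hm3, hzA, honesm, hkey⟩
            · rw [hz0, hz1]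
              push_cast
              linarith
            · rw [hz0, hz1, hzA]
              have hce : (α : ℝ) * V ≤ (e : ℝ) * V :=
                mul_le_mul_of_nonneg_right (by exact_mod_cast (by omega : α ≤ e)) hV.le
              linarith
        · -- e0 ≥ 1
          have he0pos : 1 ≤ e0 := by omega
          have hz1 : y (t - 1) = 1 := hones0 1 (by omega) he0pos
          rcases le_or_gt β e0 with hβe0 | hβe0
          · -- β ≤ e0
            have hzA : y (t - α - 1) = 1 := by
              have := hones0 (α + 1) (by omega) (by omega); rwa [eA] at this
            have hzB : y (t - β) = 1 := hones0 β (by omega) hβe0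
            have hw1 := hw1ge 2 α le_rfl le_rfl (fun j h1 h2 => hones0 j (by omega) (by omega))
            have hw2 := hw2ge (β + 1) e0 le_rfl he0smax (fun j h1 h2 => hones0 j (by omega) h2)
            have hm1 := mul_le_mul_of_nonneg_left hw1 hV.le
            have hm2 := mul_le_mul_of_nonneg_left hw2 hV.le
            push_cast at hm1 hm2
            rw [hz0, hz1, hzA, hzB]
            push_cast
            linarith [hprodS]
          · rcases hB β (by omega) (by omega) with hzB | hzB
            · have hA := keyA e0 he0pos he0smax (fun j h1 h2 => hones0 j (by omega) h2)
              rw [hz1] at hA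
              rw [hz0, hz1, hzB]
              push_cast
              linarith only [hxramp, hA, hprodS, hVW2]
            · have hβe0' : e0 + 2 ≤ β := by
                rcases eq_or_lt_of_le (by omega : e0 + 1 ≤ β) with h | h
                · exfalso
                  rw [← h] at hzB
                  rw [hoffE] at hzB; norm_num at hzB
                · omega
              rcases keyB e0 (by omega) hβe0'
                  (by rwa [show t - (e0 + 1) = t - e0 - 1 by ring]) hzB
                with hkey | ⟨e, m, hke1, hke2, hkm1, hkm2, hkm3, hzA, honesm, hkey⟩
              · have hA := keyA e0 he0pos he0smax (fun j h1 h2 => hones0 j (by omega) h2)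
                rw [hz1] at hA
                rw [hz0, hz1]
                push_cast
                linarith only [hxramp, hA, hkey]
              · have hw1 := hw1ge2 e0 m he0pos hkm1 hkm2
                  (fun j h1 h2 => hones0 j (by omega) h2) honesm
                have hm1 := mul_le_mul_of_nonneg_left hw1 hV.le
                push_cast at hm1
                have hfac : (0:ℝ) ≤ V * (1 + (e:ℝ) - (m:ℝ)) := by
                  apply mul_nonneg hV.le
                  have h1 : (m : ℝ) + (L:ℝ) - 1 ≤ (e:ℝ) := by exact_mod_cast hkm3
                  have h2 : (1:ℝ) ≤ (L:ℝ) := by exact_mod_cast hL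
                  linarith
                rw [hz0, hz1, hzA]
                push_cast
                linarith
end

section
/- Let k be an integer with 1 ≤ k ≤ T−1 and C̄ − C_ − k·V > 0, let m be an integer with 0 ≤ m ≤ k−1, and let S be a finite set of integers with S ⊆ [0, min{k−1, L−m−1}]. Then for any integer t with k+1 ≤ t ≤ T−m, every (x, y) ∈ P satisfies x_t − x_{t−k} ≤ (C_ + (k−m)·V)·y_t + V·Σ_{i=1}^{m} y_{t+i} − C_·y_{t−k} − Σ_{s∈S} (C_ + (k−s)·V − V̄)·(y_{t−s} − y_{t−s−1}). -/
lemma up_chain {T : ℤ} {V Vb : ℝ} {x y : ℤ → ℝ}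
    (hru : ∀ t : ℤ, 2 ≤ t → t ≤ T → x t - x (t - 1) ≤ V * y (t - 1) + Vb * (1 - y (t - 1))) :
    ∀ n : ℕ, ∀ a b : ℤ, b = a + n → 1 ≤ a → b ≤ T →
      (∀ j : ℤ, a ≤ j → j < b → y j = 1) → x b - x a ≤ (n : ℝ) * V := by
  intro n
  induction n with
  | zero => intro a b hb _ _ _; simp [hb]
  | succ n ih =>
    intro a b hb ha hbT hon
    have hb1 : b - 1 = a + n := by omega
    have h1 : x (b-1) - x a ≤ (n : ℝ) * V :=
      ih a (b-1) hb1 ha (by omega) (fun j hj1 hj2 => hon j hj1 (by omega))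
    have hyb : y (b-1) = 1 := hon (b-1) (by omega) (by omega)
    have h2 := hru b (by omega) hbT
    rw [hyb] at h2
    push_cast
    nlinarith

lemma down_chain {T : ℤ} {V Vb : ℝ} {x y : ℤ → ℝ}
    (hrd : ∀ t : ℤ, 2 ≤ t → t ≤ T → x (t - 1) - x t ≤ V * y t + Vb * (1 - y t)) :
    ∀ n : ℕ, ∀ a b : ℤ, b = a + n → 1 ≤ a → b ≤ T →
      (∀ j : ℤ, a < j → j ≤ b → y j = 1) → x a - x b ≤ (n : ℝ) * V := by
  intro n
  induction n with
  | zero => intro a b hb _ _ _; simp [hb]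
  | succ n ih =>
    intro a b hb ha hbT hon
    have hb1 : b - 1 = a + n := by omega
    have h1 : x a - x (b-1) ≤ (n : ℝ) * V :=
      ih a (b-1) hb1 ha (by omega) (fun j hj1 hj2 => hon j hj1 (by omega))
    have hyb : y b = 1 := hon b (by omega) (by omega)
    have h2 := hrd b (by omega) hbT
    rw [hyb] at h2
    push_cast
    nlinarith

theorem stmt_16 (T L Ldn : ℤ) (Cl Cu V Vb : ℝ)
    (hT : 1 ≤ T) (hL : 1 ≤ L) (hLdn : 1 ≤ Ldn)
    (hCl : 0 < Cl) (hCu : Cl < Cu) (hV : 0 < V)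
    (hVVb : Vb + V ≤ Cu) (hVb1 : Cl < Vb) (hVb2 : Vb < Cl + V)
    (k : ℤ) (hk1 : 1 ≤ k) (hk2 : k ≤ T - 1) (hkV : 0 < Cu - Cl - (k : ℝ) * V)
    (m : ℤ) (hm0 : 0 ≤ m) (hm1 : m ≤ k - 1)
    (S : Finset ℤ) (hS : S ⊆ Finset.Icc 0 (min (k - 1) (L - m - 1)))
    (t : ℤ) (ht1 : k + 1 ≤ t) (ht2 : t ≤ T - m)
    (x y : ℤ → ℝ) (hxy : inP T L Ldn Cl Cu V Vb x y) :
    x t - x (t - k) ≤ (Cl + ((k : ℝ) - (m : ℝ)) * V) * y t +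
      V * ∑ i ∈ Finset.Icc 1 m, y (t + i) - Cl * y (t - k) -
      ∑ s ∈ S, (Cl + ((k : ℝ) - (s : ℝ)) * V - Vb) * (y (t - s) - y (t - s - 1)) := by
  obtain ⟨hpos, hbin, hup, hdn, hlo, hhi, hru, hrd⟩ := hxy
  have hTt : t ≤ T := by omega
  have htk1 : 1 ≤ t - k := by omega
  -- range of elements of S
  have hSr : ∀ s ∈ S, 0 ≤ s ∧ s ≤ k - 1 ∧ s ≤ L - m - 1 := by
    intro s hs
    have := hS hs
    rw [Finset.mem_Icc, le_min_iff] at this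
    exact ⟨this.1, this.2.1, this.2.2⟩
  -- y is in [0,1] on the horizon
  have hy01 : ∀ j : ℤ, 1 ≤ j → j ≤ T → 0 ≤ y j ∧ y j ≤ 1 := by
    intro j h1 h2
    rcases hbin j h1 h2 with h | h <;> rw [h] <;> norm_num
  -- startup propagation via min-up
  have hprop : ∀ s : ℤ, 0 ≤ s → s ≤ k - 1 → s ≤ L - m - 1 →
      y (t - s) = 1 → y (t - s - 1) = 0 → ∀ j : ℤ, t - s ≤ j → j ≤ t + m → y j = 1 := by
    intro s hs0 hs1 hs2 hy1 hy0 j hj1 hj2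
    have h := hup (t - s) j (by omega) (by omega) hj1
      (by rw [le_min_iff]; exact ⟨by omega, by omega⟩)
    rw [hy0, hy1] at h
    rcases hbin j (by omega) (by omega) with h0 | h1
    · rw [h0] at h; norm_num at h
    · exact h1
  -- positivity of the coefficients c_s
  have hcpos : ∀ s : ℤ, s ≤ k - 1 → 0 ≤ Cl + ((k : ℝ) - (s : ℝ)) * V - Vb := by
    intro s hs
    have h1 : (1 : ℝ) ≤ (k : ℝ) - (s : ℝ) := by exact_mod_cast (by omega : (1:ℤ) ≤ k - s)
    nlinarith
  -- nonpositivity of a term when no startup at t - s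
  have hterm : ∀ s ∈ S, ¬ (y (t-s) = 1 ∧ y (t-s-1) = 0) →
      (Cl + ((k:ℝ) - (s:ℝ)) * V - Vb) * (y (t-s) - y (t-s-1)) ≤ 0 := by
    intro s hsS hns
    obtain ⟨hs0, hs1, hs2⟩ := hSr s hsS
    have hc := hcpos s hs1
    have hΔ : y (t-s) - y (t-s-1) ≤ 0 := by
      rcases hbin (t-s) (by omega) (by omega) with h1 | h1 <;>
        rcases hbin (t-s-1) (by omega) (by omega) with h2 | h2
      · rw [h1, h2]; norm_num
      · rw [h1, h2]; norm_num
      · exact absurd ⟨h1, h2⟩ hns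
      · rw [h1, h2]; norm_num
    exact mul_nonpos_iff.mpr (Or.inl ⟨hc, hΔ⟩)
  -- sum of y(t+i) is nonneg
  have hsum0 : 0 ≤ ∑ i ∈ Finset.Icc (1:ℤ) m, y (t + i) := by
    apply Finset.sum_nonneg
    intro i hi
    rw [Finset.mem_Icc] at hi
    exact (hy01 (t+i) (by omega) (by omega)).1
  rcases hbin t (by omega) hTt with hyt0 | hyt1
  · -- case y t = 0 : x t = 0
    have hxt : x t ≤ 0 := by have := hhi t (by omega) hTt; rw [hyt0] at this; linarith
    have hxtk : Cl * y (t-k) ≤ x (t-k) := hlo (t-k) (by omega) (by omega)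
    have hSle : ∑ s ∈ S, (Cl + ((k:ℝ) - (s:ℝ)) * V - Vb) * (y (t-s) - y (t-s-1)) ≤ 0 := by
      apply Finset.sum_nonpos
      intro s hsS
      apply hterm s hsS
      rintro ⟨h1, h2⟩
      obtain ⟨hs0, hs1, hs2⟩ := hSr s hsS
      have := hprop s hs0 hs1 hs2 h1 h2 t (by omega) (by omega)
      rw [this] at hyt0; norm_num at hyt0
    have hVs : 0 ≤ V * ∑ i ∈ Finset.Icc (1:ℤ) m, y (t + i) := mul_nonneg hV.le hsum0
    rw [hyt0]
    linarith
  · -- case y t = 1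
    -- does the unit shut down within (t, t+m]?
    by_cases hG : ∃ i, 1 ≤ i ∧ i ≤ m ∧ y (t + i) = 0
    · -- shutdown case: take minimal such i
      classical
      obtain ⟨i₀, hi₀mem, hi₀min⟩ := Finset.exists_min_image
        ((Finset.Icc 1 m).filter (fun i => y (t + i) = 0)) id
        (by obtain ⟨i, h1, h2, h3⟩ := hG
            exact ⟨i, Finset.mem_filter.mpr ⟨Finset.mem_Icc.mpr ⟨h1, h2⟩, h3⟩⟩)
      rw [Finset.mem_filter, Finset.mem_Icc] at hi₀mem
      obtain ⟨⟨hi₀1, hi₀m⟩, hi₀0⟩ := hi₀mem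
      -- y (t+j) = 1 for 0 ≤ j < i₀
      have hon : ∀ j : ℤ, 0 ≤ j → j < i₀ → y (t + j) = 1 := by
        intro j hj1 hj2
        rcases eq_or_lt_of_le hj1 with h | h
        · rw [← h]; simpa using hyt1
        · rcases hbin (t + j) (by omega) (by omega) with h0 | h1
          · exfalso
            have := hi₀min j (Finset.mem_filter.mpr ⟨Finset.mem_Icc.mpr ⟨by omega, by omega⟩, h0⟩)
            simp at this; omega
          · exact h1
      -- x (t + i₀) = 0 and x (t + i₀ - 1) ≤ Vb via shutdown ramp
      have hx0 : x (t + i₀) ≤ 0 := by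
        have := hhi (t + i₀) (by omega) (by omega); rw [hi₀0] at this; linarith
      have hxd : x (t + i₀ - 1) - x (t + i₀) ≤ Vb := by
        have := hrd (t + i₀) (by omega) (by omega)
        rw [hi₀0] at this; linarith
      -- chain down from t to t + i₀ - 1
      have hchain : x t - x (t + i₀ - 1) ≤ ((i₀ - 1).toNat : ℝ) * V := by
        apply down_chain hrd (i₀ - 1).toNat t (t + i₀ - 1) (by omega) (by omega) (by omega)
        intro j hj1 hj2
        have := hon (j - t) (by omega) (by omega)
        rwa [show t + (j - t) = j by ring] at this
      have hcast : ((i₀ - 1).toNat : ℝ) = (i₀ : ℝ) - 1 := by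
        have : ((i₀ - 1).toNat : ℤ) = i₀ - 1 := Int.toNat_of_nonneg (by omega)
        exact_mod_cast this
      rw [hcast] at hchain
      have hxt : x t ≤ Vb + ((i₀:ℝ) - 1) * V := by
        have hxi0 := hpos (t + i₀) (by omega) (by omega)
        linarith
      have hxtk : Cl * y (t-k) ≤ x (t-k) := hlo (t-k) (by omega) (by omega)
      -- no startup in S
      have hSle : ∑ s ∈ S, (Cl + ((k:ℝ) - (s:ℝ)) * V - Vb) * (y (t-s) - y (t-s-1)) ≤ 0 := by
        apply Finset.sum_nonpos
        intro s hsS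
        apply hterm s hsS
        rintro ⟨h1, h2⟩
        obtain ⟨hs0, hs1, hs2⟩ := hSr s hsS
        have := hprop s hs0 hs1 hs2 h1 h2 (t + i₀) (by omega) (by omega)
        rw [this] at hi₀0; norm_num at hi₀0
      -- sum of y(t+i) ≥ i₀ - 1
      have hsum1 : ((i₀:ℝ) - 1) ≤ ∑ i ∈ Finset.Icc (1:ℤ) m, y (t + i) := by
        have hsub : Finset.Icc (1:ℤ) (i₀ - 1) ⊆ Finset.Icc (1:ℤ) m := by
          apply Finset.Icc_subset_Icc le_rfl (by omega)
        have h1 : ∑ i ∈ Finset.Icc (1:ℤ) (i₀-1), y (t + i) ≤ ∑ i ∈ Finset.Icc (1:ℤ) m, y (t + i) := by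
          apply Finset.sum_le_sum_of_subset_of_nonneg hsub
          intro i hi _
          rw [Finset.mem_Icc] at hi
          exact (hy01 (t+i) (by omega) (by omega)).1
        have h2 : ∑ i ∈ Finset.Icc (1:ℤ) (i₀-1), y (t + i) = ((i₀:ℝ) - 1) := by
          have he : ∀ i ∈ Finset.Icc (1:ℤ) (i₀-1), y (t + i) = (1:ℝ) := by
            intro i hi
            rw [Finset.mem_Icc] at hi
            exact hon i (by omega) (by omega)
          rw [Finset.sum_congr rfl he, Finset.sum_const, nsmul_eq_mul, mul_one, Int.card_Icc]
          have hc : ((i₀ - 1 + 1 - 1).toNat : ℤ) = i₀ - 1 := by omega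
          exact_mod_cast hc
        linarith
      have hkm : V ≤ ((k:ℝ) - (m:ℝ)) * V := by
        have h1 : (1 : ℝ) ≤ (k : ℝ) - (m : ℝ) := by exact_mod_cast (by omega : (1:ℤ) ≤ k - m)
        nlinarith
      have hVs : V * ((i₀:ℝ) - 1) ≤ V * ∑ i ∈ Finset.Icc (1:ℤ) m, y (t + i) :=
        mul_le_mul_of_nonneg_left hsum1 hV.le
      rw [hyt1]
      linarith
    · -- no shutdown in (t, t+m]: all y(t+i) = 1
      push_neg at hG
      have hall : ∀ i : ℤ, 1 ≤ i → i ≤ m → y (t + i) = 1 := by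
        intro i h1 h2
        rcases hbin (t+i) (by omega) (by omega) with h0 | h
        · exact absurd h0 (hG i h1 h2)
        · exact h
      have hsumm : ∑ i ∈ Finset.Icc (1:ℤ) m, y (t + i) = (m : ℝ) := by
        have he : ∀ i ∈ Finset.Icc (1:ℤ) m, y (t + i) = (1:ℝ) := by
          intro i hi
          rw [Finset.mem_Icc] at hi
          exact hall i hi.1 hi.2
        rw [Finset.sum_congr rfl he, Finset.sum_const, nsmul_eq_mul, mul_one, Int.card_Icc]
        have hc : ((m + 1 - 1).toNat : ℤ) = m := by omega
        exact_mod_cast hc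
      -- does the unit start up within (t-k, t]?
      by_cases hF : ∃ j, 1 ≤ j ∧ j ≤ k ∧ y (t - j) = 0
      · -- startup case: last startup before t
        classical
        obtain ⟨j₀, hj₀mem, hj₀min⟩ := Finset.exists_min_image
          ((Finset.Icc 1 k).filter (fun j => y (t - j) = 0)) id
          (by obtain ⟨j, h1, h2, h3⟩ := hF
              exact ⟨j, Finset.mem_filter.mpr ⟨Finset.mem_Icc.mpr ⟨h1, h2⟩, h3⟩⟩)
        rw [Finset.mem_filter, Finset.mem_Icc] at hj₀mem
        obtain ⟨⟨hj₀1, hj₀k⟩, hj₀0⟩ := hj₀mem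
        -- y (t - j) = 1 for 0 ≤ j < j₀
        have honb : ∀ j : ℤ, 0 ≤ j → j < j₀ → y (t - j) = 1 := by
          intro j hj1 hj2
          rcases eq_or_lt_of_le hj1 with h | h
          · rw [← h]; simpa using hyt1
          · rcases hbin (t - j) (by omega) (by omega) with h0 | h1
            · exfalso
              have := hj₀min j (Finset.mem_filter.mpr ⟨Finset.mem_Icc.mpr ⟨by omega, by omega⟩, h0⟩)
              simp at this; omega
            · exact h1
        set s₀ : ℤ := j₀ - 1 with hs₀
        have hys₀ : y (t - s₀) = 1 := honb s₀ (by omega) (by omega)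
        have hys₀' : y (t - s₀ - 1) = 0 := by rw [show t - s₀ - 1 = t - j₀ by omega]; exact hj₀0
        -- x (t - s₀) ≤ Vb
        have hxs₀ : x (t - s₀) ≤ Vb := by
          have h1 := hru (t - s₀) (by omega) (by omega)
          rw [hys₀'] at h1
          have h2 := hhi (t - s₀ - 1) (by omega) (by omega)
          rw [hys₀'] at h2
          have h3 := hpos (t - s₀ - 1) (by omega) (by omega)
          nlinarith
        -- chain up from t - s₀ to t
        have hchain : x t - x (t - s₀) ≤ ((s₀).toNat : ℝ) * V := by
          apply up_chain hru s₀.toNat (t - s₀) t (by omega) (by omega) (by omega)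
          intro j hj1 hj2
          have := honb (t - j) (by omega) (by omega)
          rwa [show t - (t - j) = j by ring] at this
        have hcast : ((s₀).toNat : ℝ) = (s₀ : ℝ) := by
          have : ((s₀).toNat : ℤ) = s₀ := Int.toNat_of_nonneg (by omega)
          exact_mod_cast this
        rw [hcast] at hchain
        have hxt : x t ≤ Vb + (s₀ : ℝ) * V := by linarith
        have hxtk : Cl * y (t-k) ≤ x (t-k) := hlo (t-k) (by omega) (by omega)
        -- any startup in S must be at s₀
        have huniq : ∀ s ∈ S, y (t-s) = 1 → y (t-s-1) = 0 → s = s₀ := by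
          intro s hsS h1 h2
          obtain ⟨hs0, hs1, hs2⟩ := hSr s hsS
          by_contra hne
          -- s + 1 ∈ F so j₀ ≤ s + 1 i.e. s₀ ≤ s; if s₀ < s then y(t-j₀)=1, contra
          have hle : j₀ ≤ s + 1 := by
            have := hj₀min (s+1) (Finset.mem_filter.mpr ⟨Finset.mem_Icc.mpr ⟨by omega, by omega⟩,
              by rw [show t - (s+1) = t - s - 1 by ring]; exact h2⟩)
            simpa using this
          have hlt : s₀ < s := by omega
          have := hprop s hs0 hs1 hs2 h1 h2 (t - j₀) (by omega) (by omega)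
          rw [this] at hj₀0; norm_num at hj₀0
        -- bound the S sum by (if s₀ ∈ S then c s₀ else 0)
        have hSle : ∑ s ∈ S, (Cl + ((k:ℝ) - (s:ℝ)) * V - Vb) * (y (t-s) - y (t-s-1)) ≤
            (if s₀ ∈ S then (Cl + ((k:ℝ) - (s₀:ℝ)) * V - Vb) else 0) := by
          have hpt : ∀ s ∈ S, (Cl + ((k:ℝ) - (s:ℝ)) * V - Vb) * (y (t-s) - y (t-s-1)) ≤
              (if s = s₀ then (Cl + ((k:ℝ) - (s₀:ℝ)) * V - Vb) else 0) := by
            intro s hsS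
            obtain ⟨hs0, hs1, hs2⟩ := hSr s hsS
            by_cases hst : y (t-s) = 1 ∧ y (t-s-1) = 0
            · have heq : s = s₀ := huniq s hsS hst.1 hst.2
              rw [if_pos heq, heq, hys₀, hys₀']
              norm_num
            · rw [if_neg ?_]
              · exact hterm s hsS hst
              · intro heq
                rw [heq] at hst
                exact hst ⟨hys₀, hys₀'⟩
          calc ∑ s ∈ S, (Cl + ((k:ℝ) - (s:ℝ)) * V - Vb) * (y (t-s) - y (t-s-1))
              ≤ ∑ s ∈ S, (if s = s₀ then (Cl + ((k:ℝ) - (s₀:ℝ)) * V - Vb) else 0) :=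
                Finset.sum_le_sum hpt
            _ = (if s₀ ∈ S then (Cl + ((k:ℝ) - (s₀:ℝ)) * V - Vb) else 0) := by
                rw [Finset.sum_ite_eq' S s₀ (fun _ => (Cl + ((k:ℝ) - (s₀:ℝ)) * V - Vb))]
        rw [hyt1, hsumm]
        by_cases hmem : s₀ ∈ S
        · rw [if_pos hmem] at hSle
          linarith
        · rw [if_neg hmem] at hSle
          have h1 : (1 : ℝ) ≤ (k : ℝ) - (s₀ : ℝ) := by
            exact_mod_cast (by omega : (1:ℤ) ≤ k - s₀)
          have h2 : 1 * V ≤ ((k:ℝ) - (s₀:ℝ)) * V := mul_le_mul_of_nonneg_right h1 hV.le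
          linarith
      · -- unit on throughout [t-k, t]
        push_neg at hF
        have honc : ∀ j : ℤ, 0 ≤ j → j ≤ k → y (t - j) = 1 := by
          intro j hj1 hj2
          rcases eq_or_lt_of_le hj1 with h | h
          · rw [← h]; simpa using hyt1
          · rcases hbin (t - j) (by omega) (by omega) with h0 | h1
            · exact absurd h0 (hF j (by omega) hj2)
            · exact h1
        have hchain : x t - x (t - k) ≤ (k.toNat : ℝ) * V := by
          apply up_chain hru k.toNat (t - k) t (by omega) (by omega) (by omega)
          intro j hj1 hj2
          have := honc (t - j) (by omega) (by omega)
          rwa [show t - (t - j) = j by ring] at this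
        have hcast : ((k).toNat : ℝ) = (k : ℝ) := by
          have : ((k).toNat : ℤ) = k := Int.toNat_of_nonneg (by omega)
          exact_mod_cast this
        rw [hcast] at hchain
        have hytk : y (t - k) = 1 := honc k (by omega) le_rfl
        have hSz : ∑ s ∈ S, (Cl + ((k:ℝ) - (s:ℝ)) * V - Vb) * (y (t-s) - y (t-s-1)) ≤ 0 := by
          apply Finset.sum_nonpos
          intro s hsS
          obtain ⟨hs0, hs1, hs2⟩ := hSr s hsS
          have h1 : y (t - s) = 1 := honc s hs0 (by omega)
          have h2 : y (t - s - 1) = 1 := by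
            have := honc (s+1) (by omega) (by omega)
            rwa [show t - (s+1) = t - s - 1 by ring] at this
          rw [h1, h2]; simp
        rw [hyt1, hsumm, hytk]
        linarith
end

section
/- Let k be an integer with 1 ≤ k ≤ T−1 and C̄ − C_ − k·V > 0, let m be an integer with 0 ≤ m ≤ k−1, and let S be a finite set of integers with S ⊆ [0, min{k−1, L−m−1}]. Then for any integer t with m+1 ≤ t ≤ T−k, every (x, y) ∈ P satisfies x_t − x_{t+k} ≤ (C_ + (k−m)·V)·y_t + V·Σ_{i=1}^{m} y_{t−i} − C_·y_{t+k} − Σ_{s∈S} (C_ + (k−s)·V − V̄)·(y_{t+s} − y_{t+s+1}). -/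
/-- If `y a = 0` and `y b = 1` with `a ≤ b`, there is a rise in between. -/
lemma exists_rise (T : ℤ) (y : ℤ → ℝ)
    (hbin : ∀ r : ℤ, 1 ≤ r → r ≤ T → y r = 0 ∨ y r = 1)
    (a b : ℤ) (ha : 1 ≤ a) (hab : a ≤ b) (hbT : b ≤ T)
    (h0 : y a = 0) (h1 : y b = 1) :
    ∃ τ : ℤ, a < τ ∧ τ ≤ b ∧ y (τ - 1) = 0 ∧ y τ = 1 := by
  have key : ∀ n : ℕ, ∀ c : ℤ, c = a + n → c ≤ T → y c = 1 →
      ∃ τ : ℤ, a < τ ∧ τ ≤ c ∧ y (τ - 1) = 0 ∧ y τ = 1 := by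
    intro n
    induction n with
    | zero =>
      intro c hc _ hy1
      have hca : c = a := by omega
      rw [hca, h0] at hy1
      norm_num at hy1
    | succ n ih =>
      intro c hc hcT hy1
      rcases hbin (a + n) (by omega) (by omega) with h | h
      · refine ⟨c, by omega, le_refl _, ?_, hy1⟩
        rw [show c - 1 = a + (n : ℤ) from by omega]
        exact h
      · obtain ⟨τ, g1, g2, g3, g4⟩ := ih (a + n) rfl (by omega) h
        exact ⟨τ, g1, by omega, g3, g4⟩
  exact key (b - a).toNat b (by omega) hbT h1

lemma chain_down (T : ℤ) (V Vb : ℝ) (x y : ℤ → ℝ)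
    (hrd : ∀ r : ℤ, 2 ≤ r → r ≤ T → x (r - 1) - x r ≤ V * y r + Vb * (1 - y r))
    (a : ℤ) (ha : 1 ≤ a) (j : ℤ) (hj : 0 ≤ j) (hT : a + j ≤ T)
    (hones : ∀ r : ℤ, a < r → r ≤ a + j → y r = 1) :
    x a ≤ x (a + j) + (j : ℝ) * V := by
  have key : ∀ n : ℕ, a + n ≤ T → (∀ r : ℤ, a < r → r ≤ a + n → y r = 1) →
      x a ≤ x (a + n) + ((n : ℕ) : ℝ) * V := by
    intro n
    induction n with
    | zero => intro _ _; simp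
    | succ n ih =>
      intro hnT hon
      have h1 := ih (by omega) (fun r hr1 hr2 => hon r hr1 (by omega))
      have h2 := hrd (a + n + 1) (by omega) (by omega)
      rw [show a + (n : ℤ) + 1 - 1 = a + (n : ℤ) from by ring,
          hon (a + n + 1) (by omega) (by omega)] at h2
      rw [show a + ((n + 1 : ℕ) : ℤ) = a + (n : ℤ) + 1 from by push_cast; ring]
      push_cast
      linarith
  have e1 : ((j.toNat : ℕ) : ℤ) = j := by omega
  have e2 : ((j.toNat : ℕ) : ℝ) = (j : ℝ) := by
    exact_mod_cast congrArg (fun z : ℤ => (z : ℝ)) e1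
  have hres := key j.toNat (by omega) (fun r hr1 hr2 => hones r hr1 (by omega))
  rw [e1, e2] at hres
  exact hres

lemma chain_up (T : ℤ) (V Vb : ℝ) (x y : ℤ → ℝ)
    (hru : ∀ r : ℤ, 2 ≤ r → r ≤ T → x r - x (r - 1) ≤ V * y (r - 1) + Vb * (1 - y (r - 1)))
    (a : ℤ) (ha : 1 ≤ a) (j : ℤ) (hj : 0 ≤ j) (hT : a + j ≤ T)
    (hones : ∀ r : ℤ, a ≤ r → r < a + j → y r = 1) :
    x (a + j) ≤ x a + (j : ℝ) * V := by
  have key : ∀ n : ℕ, a + n ≤ T → (∀ r : ℤ, a ≤ r → r < a + n → y r = 1) →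
      x (a + n) ≤ x a + ((n : ℕ) : ℝ) * V := by
    intro n
    induction n with
    | zero => intro _ _; simp
    | succ n ih =>
      intro hnT hon
      have h1 := ih (by omega) (fun r hr1 hr2 => hon r hr1 (by omega))
      have h2 := hru (a + n + 1) (by omega) (by omega)
      rw [show a + (n : ℤ) + 1 - 1 = a + (n : ℤ) from by ring,
          hon (a + n) (by omega) (by omega)] at h2
      rw [show a + ((n + 1 : ℕ) : ℤ) = a + (n : ℤ) + 1 from by push_cast; ring]
      push_cast
      linarith
  have e1 : ((j.toNat : ℕ) : ℤ) = j := by omega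
  have e2 : ((j.toNat : ℕ) : ℝ) = (j : ℝ) := by
    exact_mod_cast congrArg (fun z : ℤ => (z : ℝ)) e1
  have hres := key j.toNat (by omega) (fun r hr1 hr2 => hones r hr1 (by omega))
  rw [e1, e2] at hres
  exact hres

theorem stmt_17 (T L Ldn : ℤ) (Cl Cu V Vb : ℝ)
    (hT : 1 ≤ T) (hL : 1 ≤ L) (hLdn : 1 ≤ Ldn)
    (hCl : 0 < Cl) (hCu : Cl < Cu) (hV : 0 < V)
    (hVVb : Vb + V ≤ Cu) (hVb1 : Cl < Vb) (hVb2 : Vb < Cl + V)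
    (k : ℤ) (hk1 : 1 ≤ k) (hk2 : k ≤ T - 1) (hkV : 0 < Cu - Cl - (k : ℝ) * V)
    (m : ℤ) (hm0 : 0 ≤ m) (hm1 : m ≤ k - 1)
    (S : Finset ℤ) (hS : S ⊆ Finset.Icc 0 (min (k - 1) (L - m - 1)))
    (t : ℤ) (ht1 : m + 1 ≤ t) (ht2 : t ≤ T - k)
    (x y : ℤ → ℝ) (hxy : inP T L Ldn Cl Cu V Vb x y) :
    x t - x (t + k) ≤ (Cl + ((k : ℝ) - (m : ℝ)) * V) * y t +
      V * ∑ i ∈ Finset.Icc 1 m, y (t - i) - Cl * y (t + k) -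
      ∑ s ∈ S, (Cl + ((k : ℝ) - (s : ℝ)) * V - Vb) * (y (t + s) - y (t + s + 1)) := by
  classical
  obtain ⟨hpos, hbin, hup, hdn, hlo, hhi, hru, hrd⟩ := hxy
  have ht0 : 1 ≤ t := by omega
  have htT : t ≤ T := by omega
  have htkT : t + k ≤ T := by omega
  have yge : ∀ r : ℤ, 1 ≤ r → r ≤ T → 0 ≤ y r := by
    intro r h1 h2; rcases hbin r h1 h2 with h | h <;> rw [h] <;> norm_num
  have yle : ∀ r : ℤ, 1 ≤ r → r ≤ T → y r ≤ 1 := by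
    intro r h1 h2; rcases hbin r h1 h2 with h | h <;> rw [h] <;> norm_num
  have xzero : ∀ r : ℤ, 1 ≤ r → r ≤ T → y r = 0 → x r = 0 := by
    intro r h1 h2 h0
    have ha := hpos r h1 h2
    have hb := hhi r h1 h2
    rw [h0, mul_zero] at hb
    linarith
  have hSb : ∀ s ∈ S, 0 ≤ s ∧ s ≤ k - 1 ∧ s ≤ L - m - 1 := by
    intro s hs
    have := hS hs
    rw [Finset.mem_Icc] at this
    omega
  -- min-up propagation: a hidden startup forces `y (t+s+1) = 1`
  have prop : ∀ s r : ℤ, 0 ≤ s → s ≤ k - 1 → s ≤ L - m - 1 →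
      t - m ≤ r → r ≤ t + s → y r = 0 → y (t + s) = 1 → y (t + s + 1) = 1 := by
    intro s r hs0 hsk hsL hr1 hr2 hyr hys
    obtain ⟨τ, hτ1, hτ2, hτ3, hτ4⟩ :=
      exists_rise T y hbin r (t + s) (by omega) hr2 (by omega) hyr hys
    have hcon := hup τ (t + s + 1) (by omega) (by omega) (by omega)
      (le_min (by omega) (by omega))
    rw [hτ3, hτ4] at hcon
    rcases hbin (t + s + 1) (by omega) (by omega) with h | h
    · rw [h] at hcon; norm_num at hcon
    · exact h
  have coefpos : ∀ s ∈ S, 0 ≤ Cl + ((k : ℝ) - (s : ℝ)) * V - Vb := by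
    intro s hs
    obtain ⟨h0, h1, h2⟩ := hSb s hs
    have h3 : (1 : ℝ) ≤ (k : ℝ) - (s : ℝ) := by
      have : (1 : ℤ) ≤ k - s := by omega
      exact_mod_cast this
    nlinarith
  have hxk : Cl * y (t + k) ≤ x (t + k) := hlo _ (by omega) (by omega)
  rcases hbin t ht0 htT with hyt | hyt
  · -- Case `y t = 0`
    have hxt : x t = 0 := xzero t ht0 htT hyt
    have hSm : (0 : ℝ) ≤ ∑ i ∈ Finset.Icc 1 m, y (t - i) :=
      Finset.sum_nonneg (fun i hi => by
        rw [Finset.mem_Icc] at hi; exact yge _ (by omega) (by omega))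
    have hVS : 0 ≤ V * ∑ i ∈ Finset.Icc 1 m, y (t - i) := mul_nonneg hV.le hSm
    have hSS : ∑ s ∈ S, (Cl + ((k : ℝ) - (s : ℝ)) * V - Vb) * (y (t + s) - y (t + s + 1))
        ≤ 0 := by
      apply Finset.sum_nonpos
      intro s hs
      obtain ⟨h0, h1, h2⟩ := hSb s hs
      have hd : y (t + s) - y (t + s + 1) ≤ 0 := by
        rcases hbin (t + s) (by omega) (by omega) with h | h
        · have := yge (t + s + 1) (by omega) (by omega); rw [h]; linarith
        · have := prop s t h0 h1 h2 (by omega) (by omega) hyt h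
          rw [h, this]; norm_num
      exact mul_nonpos_of_nonneg_of_nonpos (coefpos s hs) hd
    rw [hyt]
    linarith
  · -- Case `y t = 1`
    by_cases hA : ∃ s₀ ∈ S, y (t + s₀) = 1 ∧ y (t + s₀ + 1) = 0
    · -- there is a shutdown inside `S`
      obtain ⟨s₀, hs₀S, hys₀, hys₀'⟩ := hA
      obtain ⟨hs₀0, hs₀k, hs₀L⟩ := hSb s₀ hs₀S
      have hones : ∀ r : ℤ, t - m ≤ r → r ≤ t + s₀ → y r = 1 := by
        intro r h1 h2
        rcases hbin r (by omega) (by omega) with h | h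
        · have := prop s₀ r hs₀0 hs₀k hs₀L h1 h2 h hys₀
          rw [this] at hys₀'; norm_num at hys₀'
        · exact h
      have hd : ∀ s ∈ S, s ≠ s₀ →
          (Cl + ((k : ℝ) - (s : ℝ)) * V - Vb) * (y (t + s) - y (t + s + 1)) ≤ 0 := by
        intro s hs hne
        obtain ⟨h0, h1, h2⟩ := hSb s hs
        have hdd : y (t + s) - y (t + s + 1) ≤ 0 := by
          rcases lt_or_gt_of_ne hne with hlt | hgt
          · rw [hones (t + s) (by omega) (by omega), hones (t + s + 1) (by omega) (by omega)]
            norm_num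
          · rcases hbin (t + s) (by omega) (by omega) with h | h
            · have := yge (t + s + 1) (by omega) (by omega); rw [h]; linarith
            · have := prop s (t + s₀ + 1) h0 h1 h2 (by omega) (by omega) hys₀' h
              rw [h, this]; norm_num
        exact mul_nonpos_of_nonneg_of_nonpos (coefpos s hs) hdd
      have hSS : ∑ s ∈ S, (Cl + ((k : ℝ) - (s : ℝ)) * V - Vb) * (y (t + s) - y (t + s + 1))
          ≤ Cl + ((k : ℝ) - (s₀ : ℝ)) * V - Vb := by
        rw [← Finset.add_sum_erase S _ hs₀S]
        have h1 : (Cl + ((k : ℝ) - (s₀ : ℝ)) * V - Vb) * (y (t + s₀) - y (t + s₀ + 1))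
            = Cl + ((k : ℝ) - (s₀ : ℝ)) * V - Vb := by
          rw [hys₀, hys₀']; ring
        have h2 : ∑ s ∈ S.erase s₀,
            (Cl + ((k : ℝ) - (s : ℝ)) * V - Vb) * (y (t + s) - y (t + s + 1)) ≤ 0 :=
          Finset.sum_nonpos (fun s hs =>
            hd s (Finset.mem_of_mem_erase hs) (Finset.ne_of_mem_erase hs))
        linarith
      have hchain : x t ≤ x (t + s₀) + (s₀ : ℝ) * V :=
        chain_down T V Vb x y hrd t ht0 s₀ hs₀0 (by omega)
          (fun r hr1 hr2 => hones r (by omega) hr2)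
      have hstep := hrd (t + s₀ + 1) (by omega) (by omega)
      rw [show t + s₀ + 1 - 1 = t + s₀ from by ring, hys₀'] at hstep
      have hx0 : x (t + s₀ + 1) = 0 := xzero _ (by omega) (by omega) hys₀'
      have hSm : ∑ i ∈ Finset.Icc 1 m, y (t - i) = (m : ℝ) := by
        have h1 : ∀ i ∈ Finset.Icc 1 m, y (t - i) = 1 := fun i hi => by
          rw [Finset.mem_Icc] at hi; exact hones (t - i) (by omega) (by omega)
        rw [Finset.sum_congr rfl h1, Finset.sum_const, nsmul_eq_mul, mul_one,
          Int.card_Icc]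
        have : m + 1 - 1 = m := by ring
        rw [this]
        exact_mod_cast congrArg (fun n : ℤ => (n : ℝ)) (Int.toNat_of_nonneg hm0)
      rw [hyt, hSm]
      linarith
    · -- no shutdown inside `S`
      push_neg at hA
      have hSS : ∑ s ∈ S, (Cl + ((k : ℝ) - (s : ℝ)) * V - Vb) * (y (t + s) - y (t + s + 1))
          ≤ 0 := by
        apply Finset.sum_nonpos
        intro s hs
        obtain ⟨h0, h1, h2⟩ := hSb s hs
        have hdd : y (t + s) - y (t + s + 1) ≤ 0 := by
          rcases hbin (t + s) (by omega) (by omega) with h | h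
          · have := yge (t + s + 1) (by omega) (by omega); rw [h]; linarith
          · rcases hbin (t + s + 1) (by omega) (by omega) with h' | h'
            · exact absurd h' (hA s hs h)
            · rw [h, h']; norm_num
        exact mul_nonpos_of_nonneg_of_nonpos (coefpos s hs) hdd
      by_cases hB1 : ∃ i : ℤ, 1 ≤ i ∧ i ≤ m ∧ y (t - i) = 0
      · -- a zero in the history window
        obtain ⟨i₁, hi₁a, hi₁b, hi₁c⟩ := hB1
        set F := (Finset.Icc 1 m).filter (fun i => y (t - i) = 0) with hF
        have hFne : F.Nonempty := ⟨i₁, by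
          rw [hF, Finset.mem_filter, Finset.mem_Icc]; exact ⟨⟨hi₁a, hi₁b⟩, hi₁c⟩⟩
        set i₀ := F.min' hFne with hi₀def
        have hi₀F : i₀ ∈ F := F.min'_mem hFne
        rw [hF, Finset.mem_filter, Finset.mem_Icc] at hi₀F
        obtain ⟨⟨hi₀1, hi₀m⟩, hi₀0⟩ := hi₀F
        have hmin : ∀ i : ℤ, 1 ≤ i → i < i₀ → y (t - i) = 1 := by
          intro i h1 h2
          rcases hbin (t - i) (by omega) (by omega) with h | h
          · have : i ∈ F := by
              rw [hF, Finset.mem_filter, Finset.mem_Icc]; exact ⟨⟨h1, by omega⟩, h⟩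
            have := F.min'_le i this
            omega
          · exact h
        have hchain : x (t - i₀ + 1 + (i₀ - 1)) ≤ x (t - i₀ + 1) + ((i₀ - 1 : ℤ) : ℝ) * V := by
          apply chain_up T V Vb x y hru (t - i₀ + 1) (by omega) (i₀ - 1) (by omega) (by omega)
          intro r hr1 hr2
          have h1 : 1 ≤ t - r := by omega
          have h2 : t - r < i₀ := by omega
          have := hmin (t - r) h1 h2
          rwa [show t - (t - r) = r from by ring] at this
        rw [show t - i₀ + 1 + (i₀ - 1) = t from by ring] at hchain
        have hstep := hru (t - i₀ + 1) (by omega) (by omega)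
        rw [show t - i₀ + 1 - 1 = t - i₀ from by ring, hi₀0] at hstep
        have hx0 : x (t - i₀) = 0 := xzero _ (by omega) (by omega) hi₀0
        -- sum bound
        have hsum1 : ∑ i ∈ Finset.Icc 1 (i₀ - 1), y (t - i) = ((i₀ - 1 : ℤ) : ℝ) := by
          have h1 : ∀ i ∈ Finset.Icc 1 (i₀ - 1), y (t - i) = 1 := fun i hi => by
            rw [Finset.mem_Icc] at hi; exact hmin i hi.1 (by omega)
          rw [Finset.sum_congr rfl h1, Finset.sum_const, nsmul_eq_mul, mul_one,
            Int.card_Icc]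
          have : i₀ - 1 + 1 - 1 = i₀ - 1 := by ring
          rw [this]
          exact_mod_cast congrArg (fun n : ℤ => (n : ℝ))
            (Int.toNat_of_nonneg (by omega : (0:ℤ) ≤ i₀ - 1))
        have hsum2 : ∑ i ∈ Finset.Icc 1 (i₀ - 1), y (t - i)
            ≤ ∑ i ∈ Finset.Icc 1 m, y (t - i) := by
          apply Finset.sum_le_sum_of_subset_of_nonneg
          · intro i hi; rw [Finset.mem_Icc] at hi ⊢; omega
          · intro i hi _; rw [Finset.mem_Icc] at hi; exact yge _ (by omega) (by omega)
        have hVge : V * ((i₀ - 1 : ℤ) : ℝ) ≤ V * ∑ i ∈ Finset.Icc 1 m, y (t - i) := by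
          apply mul_le_mul_of_nonneg_left _ hV.le
          rw [← hsum1]; exact hsum2
        have hkm : V ≤ ((k : ℝ) - (m : ℝ)) * V := by
          have h3 : (1 : ℝ) ≤ (k : ℝ) - (m : ℝ) := by
            have : (1 : ℤ) ≤ k - m := by omega
            exact_mod_cast this
          nlinarith
        rw [hyt]
        push_cast at hchain hVge ⊢
        linarith
      · -- all ones in the history window
        push_neg at hB1
        have honesB : ∀ i : ℤ, 1 ≤ i → i ≤ m → y (t - i) = 1 := by
          intro i h1 h2
          rcases hbin (t - i) (by omega) (by omega) with h | h
          · exact absurd h (hB1 i h1 h2)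
          · exact h
        have hSm : ∑ i ∈ Finset.Icc 1 m, y (t - i) = (m : ℝ) := by
          have h1 : ∀ i ∈ Finset.Icc 1 m, y (t - i) = 1 := fun i hi => by
            rw [Finset.mem_Icc] at hi; exact honesB i hi.1 hi.2
          rw [Finset.sum_congr rfl h1, Finset.sum_const, nsmul_eq_mul, mul_one,
            Int.card_Icc]
          have : m + 1 - 1 = m := by ring
          rw [this]
          exact_mod_cast congrArg (fun n : ℤ => (n : ℝ)) (Int.toNat_of_nonneg hm0)
        rw [hyt, hSm]
        by_cases hfall : ∃ r : ℤ, t + 1 ≤ r ∧ r ≤ t + k ∧ y r = 0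
        · -- a shutdown somewhere in `(t, t+k]`
          obtain ⟨r₁, hr₁a, hr₁b, hr₁c⟩ := hfall
          set G := (Finset.Icc (t + 1) (t + k)).filter (fun r => y r = 0) with hG
          have hGne : G.Nonempty := ⟨r₁, by
            rw [hG, Finset.mem_filter, Finset.mem_Icc]; exact ⟨⟨hr₁a, hr₁b⟩, hr₁c⟩⟩
          set r₀ := G.min' hGne with hr₀def
          have hr₀G : r₀ ∈ G := G.min'_mem hGne
          rw [hG, Finset.mem_filter, Finset.mem_Icc] at hr₀G
          obtain ⟨⟨hr₀1, hr₀2⟩, hr₀0⟩ := hr₀G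
          have hminG : ∀ r : ℤ, t ≤ r → r < r₀ → y r = 1 := by
            intro r h1 h2
            rcases eq_or_lt_of_le h1 with rfl | h1'
            · exact hyt
            · rcases hbin r (by omega) (by omega) with h | h
              · have : r ∈ G := by
                  rw [hG, Finset.mem_filter, Finset.mem_Icc]; exact ⟨⟨by omega, by omega⟩, h⟩
                have := G.min'_le r this
                omega
              · exact h
          have hchain : x t ≤ x (t + (r₀ - t - 1)) + ((r₀ - t - 1 : ℤ) : ℝ) * V := by
            apply chain_down T V Vb x y hrd t ht0 (r₀ - t - 1) (by omega) (by omega)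
            intro r h1 h2
            exact hminG r (by omega) (by omega)
          rw [show t + (r₀ - t - 1) = r₀ - 1 from by ring] at hchain
          have hstep := hrd r₀ (by omega) (by omega)
          rw [hr₀0] at hstep
          have hx0 : x r₀ = 0 := xzero _ (by omega) (by omega) hr₀0
          have hdV : ((r₀ - t - 1 : ℤ) : ℝ) * V ≤ ((k : ℝ) - 1) * V := by
            apply mul_le_mul_of_nonneg_right _ hV.le
            have : (r₀ - t - 1 : ℤ) ≤ k - 1 := by omega
            exact_mod_cast this
          push_cast at hchain hdV ⊢
          linarith
        · -- no shutdown: chain all the way to `t + k`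
          push_neg at hfall
          have honesC : ∀ r : ℤ, t < r → r ≤ t + k → y r = 1 := by
            intro r h1 h2
            rcases hbin r (by omega) (by omega) with h | h
            · exact absurd h (hfall r (by omega) h2)
            · exact h
          have hchain : x t ≤ x (t + k) + (k : ℝ) * V :=
            chain_down T V Vb x y hrd t ht0 k (by omega) (by omega) honesC
          have hyk1 : y (t + k) ≤ 1 := yle _ (by omega) (by omega)
          have hClyk : Cl * y (t + k) ≤ Cl * 1 :=
            mul_le_mul_of_nonneg_left hyk1 hCl.le
          linarith
end

section
/- Let k be an integer with 1 ≤ k ≤ T−1 and C̄ − C_ − k·V > 0, let m be an integer with 0 ≤ m ≤ k−1, and let S be a finite set of integers with S ⊆ [0, min{k−1, L−m−2}]. Then for any integer t with k+1 ≤ t ≤ T−m−1, every (x, y) ∈ P satisfies x_t − x_{t−k} ≤ (C_ + (k−m)·V − V̄)·y_{t+m+1} + V·Σ_{i=1}^{m} y_{t+i} + V̄·y_t − C_·y_{t−k} − Σ_{s∈S} (C_ + (k−s)·V − V̄)·(y_{t−s} − y_{t−s−1}). -/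
theorem stmt_18 (T L Ldn : ℤ) (Cl Cu V Vb : ℝ)
    (hT : 1 ≤ T) (hL : 1 ≤ L) (hLdn : 1 ≤ Ldn)
    (hCl : 0 < Cl) (hCu : Cl < Cu) (hV : 0 < V)
    (hVVb : Vb + V ≤ Cu) (hVb1 : Cl < Vb) (hVb2 : Vb < Cl + V)
    (k : ℤ) (hk1 : 1 ≤ k) (hk2 : k ≤ T - 1) (hkV : 0 < Cu - Cl - (k : ℝ) * V)
    (m : ℤ) (hm0 : 0 ≤ m) (hm1 : m ≤ k - 1)
    (S : Finset ℤ) (hS : S ⊆ Finset.Icc 0 (min (k - 1) (L - m - 2)))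
    (t : ℤ) (ht1 : k + 1 ≤ t) (ht2 : t ≤ T - m - 1)
    (x y : ℤ → ℝ) (hxy : inP T L Ldn Cl Cu V Vb x y) :
    x t - x (t - k) ≤ (Cl + ((k : ℝ) - (m : ℝ)) * V - Vb) * y (t + m + 1) +
      V * ∑ i ∈ Finset.Icc 1 m, y (t + i) + Vb * y t - Cl * y (t - k) -
      ∑ s ∈ S, (Cl + ((k : ℝ) - (s : ℝ)) * V - Vb) * (y (t - s) - y (t - s - 1)) := by
  classical
  obtain ⟨hx0, hbin, hup, hdn, hlo, hhi, hru, hrd⟩ := hxy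
  -- basic facts
  have hy0 : ∀ u : ℤ, 1 ≤ u → u ≤ T → 0 ≤ y u := by
    intro u h1 h2; rcases hbin u h1 h2 with h | h <;> rw [h] <;> norm_num
  have hy1 : ∀ u : ℤ, 1 ≤ u → u ≤ T → y u ≤ 1 := by
    intro u h1 h2; rcases hbin u h1 h2 with h | h <;> rw [h] <;> norm_num
  have hSb : ∀ s ∈ S, 0 ≤ s ∧ s ≤ k - 1 ∧ s ≤ L - m - 2 := by
    intro s hs
    have := hS hs
    rw [Finset.mem_Icc] at this
    omega
  -- coefficient positivity
  have hcoef : ∀ s : ℤ, s ≤ k - 1 → 0 < Cl + ((k : ℝ) - (s : ℝ)) * V - Vb := by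
    intro s hs
    have h1 : (1 : ℝ) ≤ (k : ℝ) - (s : ℝ) := by exact_mod_cast (by omega : (1:ℤ) ≤ k - s)
    nlinarith
  -- chain lemmas
  have chainUpN : ∀ n : ℕ, ∀ a : ℤ, 1 ≤ a → a + (n : ℤ) ≤ T →
      (∀ u : ℤ, a ≤ u → u < a + (n : ℤ) → y u = 1) → x (a + (n : ℤ)) ≤ x a + (n : ℝ) * V := by
    intro n
    induction n with
    | zero => intro a _ _ _; simp
    | succ n ih =>
      intro a ha hT' hall
      have h1 := ih a ha (by push_cast at hT' ⊢; omega)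
        (fun u hu hu' => hall u hu (by push_cast at hu' ⊢; omega))
      have hyb : y (a + (n : ℤ)) = 1 := hall (a + (n : ℤ)) (by omega)
        (by push_cast; omega)
      have h2 := hru (a + (n : ℤ) + 1) (by omega) (by push_cast at hT'; omega)
      rw [show a + (n : ℤ) + 1 - 1 = a + (n : ℤ) from by ring, hyb] at h2
      have h3 : a + ((n : ℕ) + 1 : ℕ) = a + (n : ℤ) + 1 := by push_cast; ring
      have h4 : (((n : ℕ) + 1 : ℕ) : ℝ) * V = (n : ℝ) * V + V := by push_cast; ring
      rw [h3, h4]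
      linarith
  have chainDownN : ∀ n : ℕ, ∀ a : ℤ, 1 ≤ a → a + (n : ℤ) ≤ T →
      (∀ u : ℤ, a < u → u ≤ a + (n : ℤ) → y u = 1) → x a ≤ x (a + (n : ℤ)) + (n : ℝ) * V := by
    intro n
    induction n with
    | zero => intro a _ _ _; simp
    | succ n ih =>
      intro a ha hT' hall
      have h1 := ih a ha (by push_cast at hT' ⊢; omega)
        (fun u hu hu' => hall u hu (by push_cast at hu' ⊢; omega))
      have hyb : y (a + (n : ℤ) + 1) = 1 := hall (a + (n : ℤ) + 1) (by omega)
        (by push_cast; omega)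
      have h2 := hrd (a + (n : ℤ) + 1) (by omega) (by push_cast at hT'; omega)
      rw [show a + (n : ℤ) + 1 - 1 = a + (n : ℤ) from by ring, hyb] at h2
      have h3 : a + ((n : ℕ) + 1 : ℕ) = a + (n : ℤ) + 1 := by push_cast; ring
      have h4 : (((n : ℕ) + 1 : ℕ) : ℝ) * V = (n : ℝ) * V + V := by push_cast; ring
      rw [h3, h4]
      linarith
  have chainUp : ∀ a b : ℤ, 1 ≤ a → a ≤ b → b ≤ T →
      (∀ u : ℤ, a ≤ u → u < b → y u = 1) → x b ≤ x a + ((b - a : ℤ) : ℝ) * V := by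
    intro a b ha hab hbT hall
    have hne : a + ((b - a).toNat : ℤ) = b := by omega
    have hc : (((b - a).toNat : ℕ) : ℝ) = ((b - a : ℤ) : ℝ) := by
      rw [← Int.cast_natCast]; congr 1; omega
    have := chainUpN (b - a).toNat a ha (by rw [hne]; exact hbT)
      (by rw [hne]; exact hall)
    rw [hne, hc] at this
    exact this
  have chainDown : ∀ a b : ℤ, 1 ≤ a → a ≤ b → b ≤ T →
      (∀ u : ℤ, a < u → u ≤ b → y u = 1) → x a ≤ x b + ((b - a : ℤ) : ℝ) * V := by
    intro a b ha hab hbT hall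
    have hne : a + ((b - a).toNat : ℤ) = b := by omega
    have hc : (((b - a).toNat : ℕ) : ℝ) = ((b - a : ℤ) : ℝ) := by
      rw [← Int.cast_natCast]; congr 1; omega
    have := chainDownN (b - a).toNat a ha (by rw [hne]; exact hbT)
      (by rw [hne]; exact hall)
    rw [hne, hc] at this
    exact this
  -- x vanishes when y = 0
  have hxzero : ∀ u : ℤ, 1 ≤ u → u ≤ T → y u = 0 → x u = 0 := by
    intro u h1 h2 h3
    have := hhi u h1 h2
    rw [h3] at this
    have := hx0 u h1 h2
    linarith
  have hxtk : Cl * y (t - k) ≤ x (t - k) := hlo (t - k) (by omega) (by omega)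
  rcases hbin t (by omega) (by omega) with hyt | hyt
  · -- Case y t = 0
    have hxt : x t = 0 := hxzero t (by omega) (by omega) hyt
    have hsumS : ∑ s ∈ S, (Cl + ((k : ℝ) - (s : ℝ)) * V - Vb) * (y (t - s) - y (t - s - 1)) ≤ 0 := by
      apply Finset.sum_nonpos
      intro s hs
      obtain ⟨hs0, hsk, hsL⟩ := hSb s hs
      have hmu := hup (t - s) t (by omega) (by omega) (by omega)
        (by rw [le_min_iff]; omega)
      rw [show t - s - 1 = t - s - 1 from rfl] at hmu
      have hd : y (t - s) - y (t - s - 1) ≤ 0 := by rw [hyt] at hmu; linarith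
      exact mul_nonpos_of_nonneg_of_nonpos (le_of_lt (hcoef s hsk)) hd
    have hfw1 : 0 ≤ (Cl + ((k : ℝ) - (m : ℝ)) * V - Vb) * y (t + m + 1) :=
      mul_nonneg (le_of_lt (hcoef m hm1)) (hy0 (t + m + 1) (by omega) (by omega))
    have hfw2 : 0 ≤ ∑ i ∈ Finset.Icc 1 m, y (t + i) :=
      Finset.sum_nonneg fun i hi => by
        rw [Finset.mem_Icc] at hi
        exact hy0 (t + i) (by omega) (by omega)
    have : 0 ≤ V * ∑ i ∈ Finset.Icc 1 m, y (t + i) := mul_nonneg (le_of_lt hV) hfw2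
    rw [hyt, hxt]
    linarith
  · -- Case y t = 1
    -- all-ones partial sums
    have hsum_ones : ∀ b : ℤ, 0 ≤ b → b ≤ m → (∀ i : ℤ, 1 ≤ i → i ≤ b → y (t + i) = 1) →
        ∑ i ∈ Finset.Icc 1 b, y (t + i) = ((b : ℤ) : ℝ) := by
      intro b hb0 hbm hall
      have h1 : ∑ i ∈ Finset.Icc 1 b, y (t + i) = ∑ i ∈ Finset.Icc (1:ℤ) b, (1:ℝ) :=
        Finset.sum_congr rfl (fun i hi => by
          rw [Finset.mem_Icc] at hi; exact hall i hi.1 hi.2)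
      rw [h1, Finset.sum_const, nsmul_eq_mul, mul_one, Int.card_Icc]
      have h2 : ((b + 1 - 1).toNat : ℤ) = b := by omega
      exact_mod_cast h2
    -- Forward analysis
    have hFwd :
        x t ≤ Vb + ((Cl + ((k : ℝ) - (m : ℝ)) * V - Vb) * y (t + m + 1) +
          V * ∑ i ∈ Finset.Icc 1 m, y (t + i)) ∨
        (Cl + ((k : ℝ) - (m : ℝ)) * V - Vb) * y (t + m + 1) +
          V * ∑ i ∈ Finset.Icc 1 m, y (t + i) = Cl + (k : ℝ) * V - Vb := by
      by_cases hall : ∀ i : ℤ, 1 ≤ i → i ≤ m + 1 → y (t + i) = 1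
      · right
        have hym1 : y (t + m + 1) = 1 := by
          have := hall (m + 1) (by omega) le_rfl
          rwa [show t + (m + 1) = t + m + 1 from by ring] at this
        have hsum := hsum_ones m hm0 le_rfl (fun i h1 h2 => hall i h1 (by omega))
        rw [hym1, hsum]; push_cast; ring
      · left
        push_neg at hall
        obtain ⟨i, hi1, hi2, hiy⟩ := hall
        have hiy0 : y (t + i) = 0 := by
          rcases hbin (t + i) (by omega) (by omega) with h | h
          · exact h
          · exact absurd h hiy
        have hex : ∃ n : ℕ, y (t + (n : ℤ) + 1) = 0 := by
          refine ⟨(i - 1).toNat, ?_⟩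
          rw [show t + ((i - 1).toNat : ℤ) + 1 = t + i from by omega]
          exact hiy0
        set j : ℤ := (Nat.find hex : ℤ) + 1 with hjdef
        have hj1 : 1 ≤ j := by omega
        have hspec : y (t + j) = 0 := by
          have := Nat.find_spec hex
          rwa [show t + ((Nat.find hex : ℕ) : ℤ) + 1 = t + j from by rw [hjdef]; ring] at this
        have hjm : j ≤ m + 1 := by
          have h5 : Nat.find hex ≤ (i - 1).toNat := Nat.find_min' hex (by
            rw [show t + ((i - 1).toNat : ℤ) + 1 = t + i from by omega]; exact hiy0)
          omega
        have hmin : ∀ jj : ℤ, 1 ≤ jj → jj < j → y (t + jj) = 1 := by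
          intro jj h1 h2
          have h5 := Nat.find_min hex (show (jj - 1).toNat < Nat.find hex from by omega)
          rw [show t + (((jj - 1).toNat : ℕ) : ℤ) + 1 = t + jj from by omega] at h5
          rcases hbin (t + jj) (by omega) (by omega) with h | h
          · exact absurd h h5
          · exact h
        have hxj : x (t + j) = 0 := hxzero (t + j) (by omega) (by omega) hspec
        have h2 := hrd (t + j) (by omega) (by omega)
        rw [hspec, hxj] at h2
        have hxjm1 : x (t + j - 1) ≤ Vb := by linarith
        have h3 := chainDown t (t + j - 1) (by omega) (by omega) (by omega)
          (fun u hu hu' => by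
            have := hmin (u - t) (by omega) (by omega)
            rwa [show t + (u - t) = u from by ring] at this)
        rw [show t + j - 1 - t = j - 1 from by ring] at h3
        have hsub : ((j - 1 : ℤ) : ℝ) ≤ ∑ i ∈ Finset.Icc 1 m, y (t + i) := by
          have hones := hsum_ones (j - 1) (by omega) (by omega)
            (fun i h1 h2 => hmin i h1 (by omega))
          have hmono : ∑ i ∈ Finset.Icc (1:ℤ) (j - 1), y (t + i) ≤
              ∑ i ∈ Finset.Icc (1:ℤ) m, y (t + i) :=
            Finset.sum_le_sum_of_subset_of_nonneg
              (Finset.Icc_subset_Icc le_rfl (by omega))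
              (fun i hi _ => by
                rw [Finset.mem_Icc] at hi
                exact hy0 (t + i) (by omega) (by omega))
          linarith
        have hterm : 0 ≤ (Cl + ((k : ℝ) - (m : ℝ)) * V - Vb) * y (t + m + 1) :=
          mul_nonneg (le_of_lt (hcoef m hm1)) (hy0 (t + m + 1) (by omega) (by omega))
        have h6 : V * ((j - 1 : ℤ) : ℝ) ≤ V * ∑ i ∈ Finset.Icc 1 m, y (t + i) :=
          mul_le_mul_of_nonneg_left hsub (le_of_lt hV)
        have h7 : ((j - 1 : ℤ) : ℝ) * V = V * ((j - 1 : ℤ) : ℝ) := by ring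
        linarith
    -- Backward analysis
    by_cases hback : ∀ s : ℤ, 0 ≤ s → s ≤ k - 1 → y (t - s - 1) = 1
    · -- no startup in the window: all on in [t-k, t]
      have hon : ∀ u : ℤ, t - k ≤ u → u ≤ t → y u = 1 := by
        intro u hu1 hu2
        rcases eq_or_lt_of_le hu2 with h | h
        · rw [h]; exact hyt
        · have := hback (t - u - 1) (by omega) (by omega)
          rwa [show t - (t - u - 1) - 1 = u from by ring] at this
      have hS0 : ∑ s ∈ S, (Cl + ((k : ℝ) - (s : ℝ)) * V - Vb) * (y (t - s) - y (t - s - 1)) = 0 := by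
        apply Finset.sum_eq_zero
        intro s hs
        obtain ⟨hs0, hsk, _⟩ := hSb s hs
        rw [hon (t - s) (by omega) (by omega), hon (t - s - 1) (by omega) (by omega)]
        ring
      have hytk : y (t - k) = 1 := hon (t - k) le_rfl (by omega)
      rcases hFwd with hA | hB
      · rw [hyt]; linarith
      · have hchain := chainUp (t - k) t (by omega) (by omega) (by omega)
          (fun u hu hu' => hon u hu (by omega))
        rw [show t - (t - k) = k from by ring] at hchain
        rw [hyt, hytk, hS0]
        linarith
    · -- there is a startup at t - s₀
      push_neg at hback
      obtain ⟨s₁, hs₁0, hs₁k, hs₁y⟩ := hback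
      have hs₁y0 : y (t - s₁ - 1) = 0 := by
        rcases hbin (t - s₁ - 1) (by omega) (by omega) with h | h
        · exact h
        · exact absurd h hs₁y
      have hex : ∃ n : ℕ, y (t - (n : ℤ) - 1) = 0 := by
        refine ⟨s₁.toNat, ?_⟩
        rw [show t - (s₁.toNat : ℤ) - 1 = t - s₁ - 1 from by omega]
        exact hs₁y0
      set s₀ : ℤ := (Nat.find hex : ℤ) with hs₀def
      have hs₀0 : 0 ≤ s₀ := by omega
      have hs₀k : s₀ ≤ k - 1 := by
        have h5 : Nat.find hex ≤ s₁.toNat := Nat.find_min' hex (by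
          rw [show t - (s₁.toNat : ℤ) - 1 = t - s₁ - 1 from by omega]; exact hs₁y0)
        omega
      have hspec : y (t - s₀ - 1) = 0 := Nat.find_spec hex
      have hmin : ∀ s : ℤ, 0 ≤ s → s < s₀ → y (t - s - 1) = 1 := by
        intro s h1 h2
        have h5 := Nat.find_min hex (show s.toNat < Nat.find hex from by omega)
        rw [show t - ((s.toNat : ℕ) : ℤ) - 1 = t - s - 1 from by omega] at h5
        rcases hbin (t - s - 1) (by omega) (by omega) with h | h
        · exact absurd h h5
        · exact h
      have hon : ∀ u : ℤ, t - s₀ ≤ u → u ≤ t → y u = 1 := by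
        intro u hu1 hu2
        rcases eq_or_lt_of_le hu2 with h | h
        · rw [h]; exact hyt
        · have := hmin (t - u - 1) (by omega) (by omega)
          rwa [show t - (t - u - 1) - 1 = u from by ring] at this
      have hx₀ : x (t - s₀ - 1) = 0 := hxzero (t - s₀ - 1) (by omega) (by omega) hspec
      have hst := hru (t - s₀) (by omega) (by omega)
      rw [hspec, hx₀] at hst
      have hchain := chainUp (t - s₀) t (by omega) (by omega) (by omega)
        (fun u hu hu' => hon u hu (by omega))
      rw [show t - (t - s₀) = s₀ from by ring] at hchain
      have hxt : x t ≤ Vb + (s₀ : ℝ) * V := by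
        have : ((s₀ : ℤ) : ℝ) * V = (s₀ : ℝ) * V := rfl
        linarith [hchain, hst]
      have hterm : ∀ s ∈ S, s ≠ s₀ →
          (Cl + ((k : ℝ) - (s : ℝ)) * V - Vb) * (y (t - s) - y (t - s - 1)) ≤ 0 := by
        intro s hs hne
        obtain ⟨hs0, hsk, hsL⟩ := hSb s hs
        have hd : y (t - s) - y (t - s - 1) ≤ 0 := by
          rcases lt_or_gt_of_ne hne with h | h
          · rw [hon (t - s) (by omega) (by omega), hon (t - s - 1) (by omega) (by omega)]
            norm_num
          · have hmu := hup (t - s) (t - s₀ - 1) (by omega) (by omega) (by omega)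
              (by rw [le_min_iff]; omega)
            rw [hspec] at hmu
            linarith
        exact mul_nonpos_of_nonneg_of_nonpos (le_of_lt (hcoef s hsk)) hd
      by_cases hs₀S : s₀ ∈ S
      · -- startup within S: min-up forces the unit on through t+m+1
        obtain ⟨_, _, hs₀L⟩ := hSb s₀ hs₀S
        have honf : ∀ i : ℤ, 1 ≤ i → i ≤ m + 1 → y (t + i) = 1 := by
          intro i h1 h2
          have hmu := hup (t - s₀) (t + i) (by omega) (by omega) (by omega)
            (by rw [le_min_iff]; omega)
          rw [hspec, hon (t - s₀) le_rfl (by omega)] at hmu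
          have h6 := hy1 (t + i) (by omega) (by omega)
          linarith [le_antisymm h6 (by linarith : (1:ℝ) ≤ y (t + i))]
        have hym1 : y (t + m + 1) = 1 := by
          have := honf (m + 1) (by omega) le_rfl
          rwa [show t + (m + 1) = t + m + 1 from by ring] at this
        have hsum := hsum_ones m hm0 le_rfl (fun i h1 h2 => honf i h1 (by omega))
        have hsplit : ∑ s ∈ S, (Cl + ((k : ℝ) - (s : ℝ)) * V - Vb) * (y (t - s) - y (t - s - 1)) =
            (Cl + ((k : ℝ) - (s₀ : ℝ)) * V - Vb) * (y (t - s₀) - y (t - s₀ - 1)) +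
            ∑ s ∈ S.erase s₀, (Cl + ((k : ℝ) - (s : ℝ)) * V - Vb) * (y (t - s) - y (t - s - 1)) :=
          (Finset.add_sum_erase S _ hs₀S).symm
        have herase : ∑ s ∈ S.erase s₀,
            (Cl + ((k : ℝ) - (s : ℝ)) * V - Vb) * (y (t - s) - y (t - s - 1)) ≤ 0 :=
          Finset.sum_nonpos (fun s hs =>
            hterm s (Finset.mem_of_mem_erase hs) (Finset.ne_of_mem_erase hs))
        rw [hon (t - s₀) le_rfl (by omega), hspec] at hsplit
        rw [hyt, hym1, hsum]
        have hid : (Cl + ((k : ℝ) - (m : ℝ)) * V - Vb) * 1 + V * ((m : ℤ) : ℝ) + Vb * 1 -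
            (Cl + ((k : ℝ) - (s₀ : ℝ)) * V - Vb) * (1 - 0) = (s₀ : ℝ) * V + Vb := by
          push_cast; ring
        linarith [hxt, hxtk, hsplit, herase, hid]
      · -- startup outside S: whole S-sum is nonpositive
        have hSle : ∑ s ∈ S,
            (Cl + ((k : ℝ) - (s : ℝ)) * V - Vb) * (y (t - s) - y (t - s - 1)) ≤ 0 :=
          Finset.sum_nonpos (fun s hs => hterm s hs (fun h => hs₀S (h ▸ hs)))
        rcases hFwd with hA | hB
        · rw [hyt]; linarith
        · rw [hyt]
          have hsk : (s₀ : ℝ) ≤ (k : ℝ) - 1 := by exact_mod_cast hs₀k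
          have h8 : (s₀ : ℝ) * V ≤ ((k : ℝ) - 1) * V :=
            mul_le_mul_of_nonneg_right hsk (le_of_lt hV)
          have h9 : ((k : ℝ) - 1) * V = (k : ℝ) * V - V := by ring
          linarith [hxt, hxtk, hSle, hB]
end

section
/- The convex hull of P is full-dimensional in ℝ^{2T}; that is, there exist 2T + 1 affinely independent points of P (viewing each pair (x, y) as the concatenated vector in ℝ^{2T}). -/
/-- View a pair `(x, y)` as a vector in `ℝ^T × ℝ^T ≃ ℝ^{2T}` by restricting to
the periods `1,…,T` (index `j : Fin T.toNat` corresponds to period `j + 1`). -/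
def embed (T : ℤ) (p : (ℤ → ℝ) × (ℤ → ℝ)) :
    (Fin T.toNat → ℝ) × (Fin T.toNat → ℝ) :=
  (fun j => p.1 (((j : ℕ) : ℤ) + 1), fun j => p.2 (((j : ℕ) : ℤ) + 1))

/-- Generation profile of the `i`-th witness point. -/
noncomputable def xf (n : ℕ) (Cl ε : ℝ) (i : ℕ) (t : ℤ) : ℝ :=
  if i = 0 then 0
  else if i ≤ n then Cl + (if t = (i : ℤ) then ε else 0)
  else if t ≤ (i : ℤ) - n then Cl else 0

/-- On/off profile of the `i`-th witness point. -/
noncomputable def yf (n : ℕ) (i : ℕ) (t : ℤ) : ℝ :=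
  if i = 0 then 0
  else if i ≤ n then 1
  else if t ≤ (i : ℤ) - n then 1 else 0

lemma mem_xf_yf (T L Ldn : ℤ) (Cl Cu V Vb ε : ℝ)
    (hT : 1 ≤ T) (hCl : 0 < Cl) (hCu : Cl < Cu) (hV : 0 < V)
    (hVVb : Vb + V ≤ Cu) (hVb1 : Cl < Vb) (hVb2 : Vb < Cl + V)
    (hε0 : 0 < ε) (hεV : ε ≤ V) (hεC : ε ≤ Cu - Cl) (i : ℕ) :
    inP T L Ldn Cl Cu V Vb (xf T.toNat Cl ε i) (yf T.toNat i) := by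
  refine ⟨?_, ?_, ?_, ?_, ?_, ?_, ?_, ?_⟩
  · intro t h1 h2
    simp only [xf]; split_ifs <;> first | linarith | (exfalso; omega)
  · intro t h1 h2
    simp only [yf]; split_ifs <;> simp
  · intro t k h1 h2 h3 h4
    simp only [yf]; split_ifs <;> first | linarith | (exfalso; omega)
  · intro t k h1 h2 h3 h4
    simp only [yf]; split_ifs <;> first | linarith | (exfalso; omega)
  · intro t h1 h2
    simp only [xf, yf]; split_ifs <;> first | linarith | (exfalso; omega)
  · intro t h1 h2
    simp only [xf, yf]; split_ifs <;> first | linarith | (exfalso; omega)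
  · intro t h1 h2
    simp only [xf, yf]; split_ifs <;> first | linarith | (exfalso; omega)
  · intro t h1 h2
    simp only [xf, yf]; split_ifs <;> first | linarith | (exfalso; omega)

lemma termA (n : ℕ) (Cl ε w : ℝ) (i j : ℕ) (hj : j < n) :
    w * xf n Cl ε i (((j : ℕ) : ℤ) + 1) - Cl * (w * yf n i (((j : ℕ) : ℤ) + 1))
      = if i = j + 1 then ε * w else 0 := by
  simp only [xf, yf]
  split_ifs <;> first | ring1 | (exfalso; omega)

theorem stmt_19 (T L Ldn : ℤ) (Cl Cu V Vb : ℝ)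
    (hT : 1 ≤ T) (hL : 1 ≤ L) (hLdn : 1 ≤ Ldn)
    (hCl : 0 < Cl) (hCu : Cl < Cu) (hV : 0 < V)
    (hVVb : Vb + V ≤ Cu) (hVb1 : Cl < Vb) (hVb2 : Vb < Cl + V) :
    ∃ p : Fin (2 * T.toNat + 1) → (ℤ → ℝ) × (ℤ → ℝ),
      (∀ i, inP T L Ldn Cl Cu V Vb (p i).1 (p i).2) ∧
      AffineIndependent ℝ (fun i => embed T (p i)) := by
  set n := T.toNat with hn
  have hn1 : 1 ≤ n := by omega
  set ε := min V (Cu - Cl) with hε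
  have hε0 : 0 < ε := lt_min hV (by linarith)
  have hεV : ε ≤ V := min_le_left _ _
  have hεC : ε ≤ Cu - Cl := min_le_right _ _
  refine ⟨fun i => (xf n Cl ε i.val, yf n i.val), ?_, ?_⟩
  · intro i
    exact mem_xf_yf T L Ldn Cl Cu V Vb ε hT hCl hCu hV hVVb hVb1 hVb2 hε0 hεV hεC i.val
  rw [affineIndependent_iff]
  intro s w hw0 hsum e he
  -- coordinatewise equations
  have hX : ∀ j : Fin n, ∑ i ∈ s, w i * xf n Cl ε i.val (((j : ℕ) : ℤ) + 1) = 0 := by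
    intro j
    have h1 := congrFun (congrArg Prod.fst hsum) j
    rw [Prod.fst_sum] at h1
    simpa [embed, Finset.sum_apply] using h1
  have hY : ∀ j : Fin n, ∑ i ∈ s, w i * yf n i.val (((j : ℕ) : ℤ) + 1) = 0 := by
    intro j
    have h1 := congrFun (congrArg Prod.snd hsum) j
    rw [Prod.snd_sum] at h1
    simpa [embed, Finset.sum_apply] using h1
  -- step A : the middle-range weights vanish
  have hα : ∀ i : Fin (2 * n + 1), i ∈ s → 1 ≤ i.val → i.val ≤ n → w i = 0 := by
    intro i hi h1 h2
    have hjlt : i.val - 1 < n := by omega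
    set j : Fin n := ⟨i.val - 1, hjlt⟩ with hj
    have key : ∑ i' ∈ s, (w i' * xf n Cl ε i'.val (((j : ℕ) : ℤ) + 1)
        - Cl * (w i' * yf n i'.val (((j : ℕ) : ℤ) + 1))) = 0 := by
      rw [Finset.sum_sub_distrib, ← Finset.mul_sum, hX j, hY j]; ring
    have key2 : ∑ i' ∈ s, (if i' = i then ε * w i' else 0) = 0 := by
      calc ∑ i' ∈ s, (if i' = i then ε * w i' else 0)
          = ∑ i' ∈ s, (w i' * xf n Cl ε i'.val (((j : ℕ) : ℤ) + 1)
              - Cl * (w i' * yf n i'.val (((j : ℕ) : ℤ) + 1))) := by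
            refine Finset.sum_congr rfl fun i' _ => ?_
            rw [termA n Cl ε (w i') i'.val (j : ℕ) j.isLt]
            refine if_congr ?_ rfl rfl
            rw [Fin.ext_iff]
            simp only [hj, Fin.val_mk]
            omega
        _ = 0 := key
    rw [Finset.sum_ite_eq' s i (fun i' => ε * w i'), if_pos hi] at key2
    rcases mul_eq_zero.mp key2 with h | h
    · exact absurd h (ne_of_gt hε0)
    · exact h
  -- partial sums of the tail weights
  set S : ℕ → ℝ := fun a => ∑ i ∈ s, if a ≤ i.val then w i else 0 with hS
  have hStail : ∀ a : ℕ, n + 1 ≤ a → a ≤ 2 * n → S a = 0 := by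
    intro a ha1 ha2
    have hjlt : a - n - 1 < n := by omega
    have hYj := hY ⟨a - n - 1, hjlt⟩
    simp only [Fin.val_mk] at hYj
    calc S a = ∑ i ∈ s, w i * yf n i.val (((a - n - 1 : ℕ) : ℤ) + 1) := by
          refine Finset.sum_congr rfl fun i hi => ?_
          by_cases h0 : i.val = 0
          · simp only [yf]; split_ifs <;> first | ring1 | (exfalso; omega)
          by_cases hmid : i.val ≤ n
          · rw [hα i hi (by omega) hmid]
            simp only [yf]; split_ifs <;> first | ring1 | (exfalso; omega)
          · simp only [yf]; split_ifs <;> first | ring1 | (exfalso; omega)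
      _ = 0 := hYj
  have hSend : S (2 * n + 1) = 0 := by
    refine Finset.sum_eq_zero fun i _ => ?_
    rw [if_neg (by have := i.isLt; omega)]
  have hSdiff : ∀ (a : ℕ) (ha : a ≤ 2 * n),
      S a - S (a + 1)
        = if (⟨a, by omega⟩ : Fin (2 * n + 1)) ∈ s then w ⟨a, by omega⟩ else 0 := by
    intro a ha
    rw [← Finset.sum_ite_eq' s (⟨a, by omega⟩ : Fin (2 * n + 1)) (fun i => w i)]
    rw [hS]
    rw [← Finset.sum_sub_distrib]
    refine Finset.sum_congr rfl fun i _ => ?_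
    simp only [Fin.ext_iff, Fin.val_mk]
    split_ifs <;> first | ring1 | (exfalso; omega)
  have hβ : ∀ i : Fin (2 * n + 1), i ∈ s → n < i.val → w i = 0 := by
    intro i hi hgt
    have hlt := i.isLt
    have hd := hSdiff i.val (by omega)
    have hz1 : S i.val = 0 := hStail i.val (by omega) (by omega)
    have hz2 : S (i.val + 1) = 0 := by
      by_cases h : i.val + 1 ≤ 2 * n
      · exact hStail (i.val + 1) (by omega) h
      · have h2n : i.val + 1 = 2 * n + 1 := by omega
        rw [h2n]; exact hSend
    rw [hz1, hz2] at hd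
    have hie : (⟨i.val, by omega⟩ : Fin (2 * n + 1)) = i := by ext; rfl
    rw [hie, if_pos hi] at hd
    linarith
  -- conclude
  by_cases h0 : e.val = 0
  · have hse : ∑ i ∈ s, w i = w e := by
      refine Finset.sum_eq_single_of_mem e he fun b hb hbe => ?_
      by_cases hb1 : b.val ≤ n
      · refine hα b hb ?_ hb1
        have : b.val ≠ 0 := fun h => hbe (by ext; omega)
        omega
      · exact hβ b hb (by omega)
    rw [hw0] at hse; exact hse.symm
  by_cases h1 : e.val ≤ n
  · exact hα e he (by omega) h1
  · exact hβ e he (by omega)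
end
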